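/- arXiv:math/0503668 — 6 statements merged into one kernel-verified Lean document; each statement's English description precedes it below -/
import Mathlib

section
/- Let f be a bounded, symmetric (f(x) = f(−x) for all x) and strictly unimodal probability density on ℝ (f attains its maximum at the unique point 0 and is strictly decreasing on (0, ∞)). Then for every c > 0 and every t ≠ 0, ∫_{−c}^{c} f(x + t) dx < ∫_{−c}^{c} f(x) dx. -/
/-!
Write `I(t) = ∫_{-c}^{c} f (x + t) dx`. Since `f` is even, `I` is even, so we may take `t > 0`.
Then `I(0) - I(t) = ∫_{-c}^{-c+t} f - ∫_{c}^{c+t} f = ∫_{-c}^{-c+t} (f x - f (x + 2c)) dx`,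
and on `(-c, -c + t)` we have `|x| < x + 2c`, so the integrand is positive by strict unimodality.
-/

open MeasureTheory Set intervalIntegral

section

variable {f : ℝ → ℝ}

theorem strictAntiOn_Ici_of_strictAntiOn_Ioi (hmode : ∀ x : ℝ, x ≠ 0 → f x < f 0)
    (hanti : StrictAntiOn f (Ioi 0)) : StrictAntiOn f (Ici 0) := by
  intro a ha b _ hab
  rcases (mem_Ici.1 ha).eq_or_lt with rfl | ha'
  · exact hmode b hab.ne'
  · exact hanti ha' (ha'.trans hab) hab

theorem Function.Even.apply_abs (hf : Function.Even f) (x : ℝ) : f |x| = f x := by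
  rcases abs_choice x with h | h <;> rw [h]
  exact hf x

theorem Function.Even.apply_lt_apply_of_abs_lt (hf : Function.Even f)
    (hanti : StrictAntiOn f (Ici 0)) {a b : ℝ} (hab : |a| < |b|) : f b < f a := by
  rw [← hf.apply_abs a, ← hf.apply_abs b]
  exact hanti (abs_nonneg a) (abs_nonneg b) hab

theorem Function.Even.integral_comp_add_neg (hf : Function.Even f) (a t : ℝ) :
    ∫ x in -a..a, f (x + -t) = ∫ x in -a..a, f (x + t) := by
  calc ∫ x in -a..a, f (x + -t) = ∫ x in -a..a, f (-x + t) := by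
        congr with x
        rw [← hf, neg_add, neg_neg]
    _ = ∫ x in -a..a, f (x + t) := by
        rw [integral_comp_neg (fun x ↦ f (x + t)), neg_neg]

theorem Function.Even.integral_comp_add_abs (hf : Function.Even f) (a t : ℝ) :
    ∫ x in -a..a, f (x + |t|) = ∫ x in -a..a, f (x + t) := by
  rcases abs_choice t with h | h <;> rw [h]
  exact hf.integral_comp_add_neg a t

theorem Function.Even.integral_comp_add_lt_of_pos (hf : Function.Even f)
    (hanti : StrictAntiOn f (Ici 0)) (hfi : LocallyIntegrable f volume) {c t : ℝ}
    (hc : 0 < c) (ht : 0 < t) :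
    ∫ x in -c..c, f (x + t) < ∫ x in -c..c, f x := by
  have hfi' : ∀ a b : ℝ, IntervalIntegrable f volume a b := fun a b ↦
    (hfi.integrableOn_isCompact isCompact_uIcc).intervalIntegrable
  have hshift : IntervalIntegrable (fun x ↦ f (x + 2 * c)) volume (-c) (-c + t) :=
    (IntervalIntegrable.comp_add_right_iff).2 (hfi' _ _)
  have hright : ∫ x in c..c + t, f x = ∫ x in -c..-c + t, f (x + 2 * c) := by
    rw [integral_comp_add_right]
    ring_nf
  have hpos : ∀ x ∈ Ioo (-c) (-c + t), 0 < f x - f (x + 2 * c) := fun x hx ↦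
    sub_pos.2 <| hf.apply_lt_apply_of_abs_lt hanti <| by
      rw [abs_of_pos (a := x + 2 * c) (by linarith [hx.1])]
      exact abs_lt.2 ⟨by linarith [hx.1], by linarith⟩
  rw [integral_comp_add_right, ← sub_pos,
    integral_interval_sub_interval_comm (hfi' _ _) (hfi' _ _) (hfi' _ _), hright,
    ← integral_sub (hfi' _ _) hshift]
  exact intervalIntegral_pos_of_pos_on ((hfi' _ _).sub hshift) hpos (by linarith)

end

theorem anderson_strict_one_dim_general
    (f : ℝ → ℝ)
    (hint : Integrable f (volume : Measure ℝ))
    (hsymm : ∀ x, f x = f (-x))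
    (hmode : ∀ x : ℝ, x ≠ 0 → f x < f 0)
    (hanti : StrictAntiOn f (Set.Ioi (0 : ℝ))) :
    ∀ c : ℝ, 0 < c → ∀ t : ℝ, t ≠ 0 →
      (∫ x in Set.Icc (-c) c, f (x + t)) < ∫ x in Set.Icc (-c) c, f x := by
  intro c hc t ht
  have heven : Function.Even f := fun x ↦ (hsymm x).symm
  rw [integral_Icc_eq_integral_Ioc, integral_Icc_eq_integral_Ioc, ← integral_of_le (by linarith),
    ← integral_of_le (by linarith), ← heven.integral_comp_add_abs]
  exact heven.integral_comp_add_lt_of_pos (strictAntiOn_Ici_of_strictAntiOn_Ioi hmode hanti)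
    hint.locallyIntegrable hc (abs_pos.2 ht)

/-- One-dimensional strict version of Anderson's lemma: for a bounded, symmetric,
strictly unimodal probability density `f` on `ℝ`, shifting the window `[-c, c]`
strictly decreases the integral. -/
theorem anderson_strict_one_dim
    (f : ℝ → ℝ)
    (hnn : ∀ x, 0 ≤ f x)
    (hint : Integrable f (volume : Measure ℝ))
    (hone : ∫ x, f x = 1)
    (hbdd : ∃ C : ℝ, ∀ x, f x ≤ C)
    (hsymm : ∀ x, f x = f (-x))
    (hmode : ∀ x : ℝ, x ≠ 0 → f x < f 0)
    (hanti : StrictAntiOn f (Set.Ioi (0 : ℝ))) :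
    ∀ c : ℝ, 0 < c → ∀ t : ℝ, t ≠ 0 →
      (∫ x in Set.Icc (-c) c, f (x + t)) < ∫ x in Set.Icc (-c) c, f x :=
  anderson_strict_one_dim_general f hint hsymm hmode hanti
end

section
/- Let ε be a real random variable, independent of X, with Lebesgue density f bounded by a constant C, let Z = (X, 1)^T, and suppose E‖Z‖ < ∞. Then for every r > 0 and every δ > 0, P{r − δ ≤ |ε|/‖Z‖ ≤ r + δ} ≤ 4Cδ E‖Z‖. -/
/-! By independence, the probability is the `X`-average of the `ε`-probability of the slice
`{e | (r - δ)‖z‖ ≤ |e| ≤ (r + δ)‖z‖}` at `z = (X, 1)`. That slice is two intervals of length at most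
`2δ‖z‖` each, so a density bounded by `C` gives it mass at most `4Cδ‖z‖`; integrating over `X`
gives `4Cδ E‖Z‖`. -/

open MeasureTheory ProbabilityTheory

lemma withDensity_ofReal_apply_le {α : Type*} [MeasurableSpace α] {μ : Measure α}
    {f : α → ℝ} {C : ℝ} (hC : ∀ x, f x ≤ C) (s : Set α) :
    μ.withDensity (fun x => ENNReal.ofReal (f x)) s ≤ ENNReal.ofReal C * μ s :=
  calc μ.withDensity (fun x => ENNReal.ofReal (f x)) s
      ≤ μ.withDensity (fun _ => ENNReal.ofReal C) s :=
        withDensity_mono (ae_of_all _ fun x => ENNReal.ofReal_le_ofReal (hC x)) s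
    _ = ENNReal.ofReal C * μ s := by rw [withDensity_const, Measure.smul_apply, smul_eq_mul]

lemma Real.volume_setOf_abs_mem_Icc_le (a b : ℝ) :
    volume {e : ℝ | a ≤ |e| ∧ |e| ≤ b} ≤ 2 * ENNReal.ofReal (b - a) := by
  set a' := max a 0
  have hsub : {e : ℝ | a ≤ |e| ∧ |e| ≤ b} ⊆ Set.Icc (-b) (-a') ∪ Set.Icc a' b := by
    rintro e ⟨hae, heb⟩
    rcases le_or_gt 0 e with he | he
    · right; rw [abs_of_nonneg he] at hae heb; exact ⟨max_le hae he, heb⟩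
    · left; rw [abs_of_neg he] at hae heb
      exact ⟨by linarith, le_neg.mpr (max_le hae (by linarith))⟩
  calc volume {e : ℝ | a ≤ |e| ∧ |e| ≤ b}
      ≤ volume (Set.Icc (-b) (-a')) + volume (Set.Icc a' b) :=
        (measure_mono hsub).trans (measure_union_le _ _)
    _ = 2 * ENNReal.ofReal (b - a') := by
        rw [Real.volume_Icc, Real.volume_Icc, neg_sub_neg, two_mul]
    _ ≤ 2 * ENNReal.ofReal (b - a) := by gcongr; exact le_max_left a 0

lemma withDensity_setOf_abs_mem_Icc_le {f : ℝ → ℝ} {C : ℝ} (hC0 : 0 ≤ C) (hC : ∀ x, f x ≤ C)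
    (a b : ℝ) :
    volume.withDensity (fun x => ENNReal.ofReal (f x)) {e : ℝ | a ≤ |e| ∧ |e| ≤ b}
      ≤ ENNReal.ofReal (2 * C * (b - a)) :=
  calc volume.withDensity (fun x => ENNReal.ofReal (f x)) {e : ℝ | a ≤ |e| ∧ |e| ≤ b}
      ≤ ENNReal.ofReal C * (2 * ENNReal.ofReal (b - a)) :=
        (withDensity_ofReal_apply_le hC _).trans <| by
          gcongr; exact Real.volume_setOf_abs_mem_Icc_le a b
    _ = ENNReal.ofReal (2 * C * (b - a)) := by
        rw [← ENNReal.ofReal_ofNat 2, ← ENNReal.ofReal_mul zero_le_two, ← ENNReal.ofReal_mul hC0,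
          mul_left_comm, mul_assoc]

lemma ProbabilityTheory.IndepFun.measure_preimage_prod_eq_lintegral {Ω α β : Type*}
    [MeasurableSpace Ω] [MeasurableSpace α] [MeasurableSpace β]
    {μ : Measure Ω} [IsFiniteMeasure μ] {X : Ω → α} {Y : Ω → β}
    (hXY : IndepFun X Y μ) (hX : Measurable X) (hY : Measurable Y)
    {S : Set (α × β)} (hS : MeasurableSet S) :
    μ ((fun ω => (X ω, Y ω)) ⁻¹' S) = ∫⁻ ω, μ.map Y (Prod.mk (X ω) ⁻¹' S) ∂μ := by
  rw [← Measure.map_apply (hX.prodMk hY) hS, hXY.map_prod_eq_prod_map_map hX.aemeasurable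
    hY.aemeasurable, Measure.prod_apply hS, lintegral_map (measurable_measure_prodMk_left hS) hX]

theorem hough_envelope_bound_general
    {Ω : Type*} [MeasureSpace Ω] [IsProbabilityMeasure (ℙ : Measure Ω)]
    (X ε : Ω → ℝ) (hmX : Measurable X) (hmε : Measurable ε)
    (hindep : IndepFun X ε ℙ)
    (f : ℝ → ℝ) (C : ℝ)
    (hdens : Measure.map ε ℙ = volume.withDensity (fun x => ENNReal.ofReal (f x)))
    (hnn : ∀ x, 0 ≤ f x)
    (hC : ∀ x, f x ≤ C)
    (hZ : Integrable (fun ω => Real.sqrt (X ω ^ 2 + 1)) ℙ)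
    (r δ : ℝ) (hδ : 0 < δ) :
    (ℙ {ω | r - δ ≤ |ε ω| / Real.sqrt (X ω ^ 2 + 1) ∧
        |ε ω| / Real.sqrt (X ω ^ 2 + 1) ≤ r + δ}).toReal
      ≤ 4 * C * δ * ∫ ω, Real.sqrt (X ω ^ 2 + 1) ∂ℙ := by
  set g : ℝ → ℝ := fun x => Real.sqrt (x ^ 2 + 1)
  have hg_pos (x : ℝ) : 0 < g x := Real.sqrt_pos.2 (by positivity)
  have hC0 : 0 ≤ C := (hnn 0).trans (hC 0)
  let S : Set (ℝ × ℝ) := {p | (r - δ) * g p.1 ≤ |p.2| ∧ |p.2| ≤ (r + δ) * g p.1}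
  have hS : MeasurableSet S := by unfold S g; measurability
  have hevent : {ω | r - δ ≤ |ε ω| / g (X ω) ∧ |ε ω| / g (X ω) ≤ r + δ}
      = (fun ω => (X ω, ε ω)) ⁻¹' S := by
    ext ω
    exact and_congr (le_div_iff₀ (hg_pos (X ω))) (div_le_iff₀ (hg_pos (X ω)))
  have hslice (x : ℝ) :
      Measure.map ε ℙ (Prod.mk x ⁻¹' S) ≤ ENNReal.ofReal (4 * C * δ * g x) := by
    have h := withDensity_setOf_abs_mem_Icc_le hC0 hC ((r - δ) * g x) ((r + δ) * g x)
    rwa [← hdens, show 2 * C * ((r + δ) * g x - (r - δ) * g x) = 4 * C * δ * g x by ring] at h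
  refine ENNReal.toReal_le_of_le_ofReal (by positivity) ?_
  calc ℙ {ω | r - δ ≤ |ε ω| / g (X ω) ∧ |ε ω| / g (X ω) ≤ r + δ}
      = ∫⁻ ω, Measure.map ε ℙ (Prod.mk (X ω) ⁻¹' S) ∂ℙ := by
        rw [hevent, hindep.measure_preimage_prod_eq_lintegral hmX hmε hS]
    _ ≤ ∫⁻ ω, ENNReal.ofReal (4 * C * δ * g (X ω)) ∂ℙ := lintegral_mono fun ω => hslice (X ω)
    _ = ENNReal.ofReal (4 * C * δ * ∫ ω, g (X ω) ∂ℙ) := by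
        rw [← integral_const_mul, ofReal_integral_eq_lintegral_ofReal (hZ.const_mul _)
          (ae_of_all _ fun ω => by positivity)]

/-- If `ε` is independent of `X` with Lebesgue density `f` bounded by `C`, and
`Z = (X, 1)ᵀ` satisfies `E‖Z‖ < ∞`, then for every `r > 0` and `δ > 0`,
`P{r − δ ≤ |ε|/‖Z‖ ≤ r + δ} ≤ 4Cδ E‖Z‖`. -/
theorem hough_envelope_bound
    {Ω : Type*} [MeasureSpace Ω] [IsProbabilityMeasure (ℙ : Measure Ω)]
    (X ε : Ω → ℝ) (hmX : Measurable X) (hmε : Measurable ε)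
    (hindep : IndepFun X ε ℙ)
    (f : ℝ → ℝ) (C : ℝ)
    (hdens : Measure.map ε ℙ = volume.withDensity (fun x => ENNReal.ofReal (f x)))
    (hnn : ∀ x, 0 ≤ f x)
    (hC : ∀ x, f x ≤ C)
    (hZ : Integrable (fun ω => Real.sqrt (X ω ^ 2 + 1)) ℙ)
    (r δ : ℝ) (hr : 0 < r) (hδ : 0 < δ) :
    (ℙ {ω | r - δ ≤ |ε ω| / Real.sqrt (X ω ^ 2 + 1) ∧
        |ε ω| / Real.sqrt (X ω ^ 2 + 1) ≤ r + δ}).toReal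
      ≤ 4 * C * δ * ∫ ω, Real.sqrt (X ω ^ 2 + 1) ∂ℙ :=
  hough_envelope_bound_general X ε hmX hmε hindep f C hdens hnn hC hZ r δ hδ
end

section
/- Let 𝒴_n = {(X_1, Y_1), ..., (X_n, Y_n)} be a fixed finite sample with no repeated values of X_i. For r > 0 let k = max_{θ ∈ ℝ²} #{i ≤ n : |X_i a + b − Y_i|² ≤ r²(X_i² + 1)} be the maximal number of data points covered by a Hough template. Then the finite-sample addition breakdown point of the Hough transform estimator equals (k − 1)/(n + k − 1); that is: (i) for every m ≤ k − 2 there exists a bound B < ∞ (depending only on 𝒴_n, r and m) such that for every added data set 𝒴′_m of m points, every maximizer θ of the objective Σ_{(x,y) ∈ 𝒴_n ∪ 𝒴′_m} 1{|xa + b − y|² ≤ r²(x² + 1)} satisfies ‖θ‖ ≤ B; and (ii) for every R > 0 there exists an added data set 𝒴′_{k−1} of k − 1 points such that some maximizer θ of the objective over 𝒴_n ∪ 𝒴′_{k−1} satisfies ‖θ‖ > R. -/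
open scoped Classical in
/-- The number of data points of `d` covered by the Hough template with center `θ`
and radius `r`. -/
noncomputable def houghCount {m : ℕ} (r : ℝ) (d : Fin m → ℝ × ℝ) (θ : ℝ × ℝ) : ℕ :=
  (Finset.univ.filter fun i : Fin m =>
    |(d i).1 * θ.1 + θ.2 - (d i).2| ^ 2 ≤ r ^ 2 * ((d i).1 ^ 2 + 1)).card

/-!
A template that covers two data points with distinct abscissae is confined to a bounded set, and
since there are finitely many pairs of data points, one bound `M` serves all templates covering
at least two of them. With `m ≤ k - 2` added points, a maximizer covers at least `k` points in
total, hence at least two data points, so `‖θ‖ ≤ M`. Conversely, put `k - 1` points on a line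
of slope larger than `M` through one data point, far to the right. That line covers at least `k`
points, while any other template covers at most `k`: if it reaches the added points its norm
exceeds `M`, so it covers at most one data point.
-/

open Finset Bornology

def HoughCovers (r : ℝ) (θ p : ℝ × ℝ) : Prop :=
  |p.1 * θ.1 + θ.2 - p.2| ^ 2 ≤ r ^ 2 * (p.1 ^ 2 + 1)

def IsHoughMaximizer {n m : ℕ} (r : ℝ) (d : Fin n → ℝ × ℝ) (add : Fin m → ℝ × ℝ)
    (θ : ℝ × ℝ) : Prop :=
  ∀ θ' : ℝ × ℝ,
    houghCount r d θ' + houghCount r add θ' ≤ houghCount r d θ + houghCount r add θ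

section HoughCovers

variable {r : ℝ} {θ p : ℝ × ℝ}

theorem houghCovers_of_eq (h : p.2 = p.1 * θ.1 + θ.2) : HoughCovers r θ p := by
  rw [HoughCovers, h, sub_self, abs_zero, zero_pow two_ne_zero]
  positivity

theorem HoughCovers.abs_sub_le (h : HoughCovers r θ p) :
    |p.1 * θ.1 + θ.2 - p.2| ≤ |r| * (|p.1| + 1) := by
  refine abs_le_of_sq_le_sq ?_ (by positivity)
  calc (p.1 * θ.1 + θ.2 - p.2) ^ 2 ≤ r ^ 2 * (p.1 ^ 2 + 1) := by rwa [HoughCovers, sq_abs] at h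
    _ ≤ (|r| * (|p.1| + 1)) ^ 2 := by
      rw [mul_pow, sq_abs]
      gcongr
      nlinarith [abs_nonneg p.1, sq_abs p.1]

theorem isBounded_setOf_houghCovers_pair (r : ℝ) {p q : ℝ × ℝ} (hpq : p.1 ≠ q.1) :
    IsBounded {θ | HoughCovers r θ p ∧ HoughCovers r θ q} := by
  set A := (|r| * (|p.1| + 1) + |r| * (|q.1| + 1) + |p.2 - q.2|) / |p.1 - q.1|
  refine isBounded_iff_forall_norm_le.2 ⟨max A (|r| * (|p.1| + 1) + |p.1| * A + |p.2|), ?_⟩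
  rintro θ ⟨hp, hq⟩
  have hp' := hp.abs_sub_le
  have hq' := hq.abs_sub_le
  have hθ₁ : |θ.1| ≤ A := by
    rw [le_div_iff₀ (abs_pos.2 (sub_ne_zero.2 hpq)), ← abs_mul, mul_comm]
    calc |(p.1 - q.1) * θ.1|
        = |(p.1 * θ.1 + θ.2 - p.2) - (q.1 * θ.1 + θ.2 - q.2) + (p.2 - q.2)| := by ring_nf
      _ ≤ |p.1 * θ.1 + θ.2 - p.2| + |q.1 * θ.1 + θ.2 - q.2| + |p.2 - q.2| :=
        (abs_add_le _ _).trans (add_le_add_left (abs_sub _ _) _)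
      _ ≤ _ := by gcongr
  have hθ₂ : |θ.2| ≤ |r| * (|p.1| + 1) + |p.1| * A + |p.2| :=
    calc |θ.2| = |(p.1 * θ.1 + θ.2 - p.2) - p.1 * θ.1 + p.2| := by ring_nf
      _ ≤ |p.1 * θ.1 + θ.2 - p.2| + |p.1| * |θ.1| + |p.2| := by
        rw [← abs_mul]
        exact (abs_add_le _ _).trans (add_le_add_left (abs_sub _ _) _)
      _ ≤ _ := by gcongr
  exact norm_prod_le_iff.2 ⟨hθ₁.trans (le_max_left _ _), hθ₂.trans (le_max_right _ _)⟩

theorem not_houghCovers_of_norm_le {M a b t : ℝ} (hθ : ‖θ‖ ≤ M) (ha : M + |r| + 1 ≤ a)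
    (ht : |r| + M + |b| < t) : ¬ HoughCovers r θ (t, a * t + b) := by
  -- the residual at abscissa `t` is at least `(a - M) t - M - |b| ≥ (|r| + 1) t - M - |b|`,
  -- which beats the tolerance `|r| (t + 1)`
  intro h
  have hcov := (abs_le.1 h.abs_sub_le).1
  have hθ₁ : θ.1 ≤ M := (le_abs_self _).trans ((norm_fst_le θ).trans hθ)
  have hθ₂ : θ.2 ≤ M := (le_abs_self _).trans ((norm_snd_le θ).trans hθ)
  have ht₀ : 0 < t := by linarith [abs_nonneg r, abs_nonneg b, (norm_nonneg θ).trans hθ]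
  simp only [abs_of_pos ht₀] at hcov
  nlinarith [neg_abs_le b]

end HoughCovers

section houghCount

variable {m : ℕ} {r : ℝ} {d : Fin m → ℝ × ℝ} {θ : ℝ × ℝ}

open Classical in
theorem houghCount_eq_card : houghCount r d θ = #{i | HoughCovers r θ (d i)} := rfl

theorem houghCount_le_card : houghCount r d θ ≤ m :=
  (card_filter_le _ _).trans_eq (card_fin m)

theorem houghCount_pos_iff : 0 < houghCount r d θ ↔ ∃ i, HoughCovers r θ (d i) := by
  classical
  simp [houghCount_eq_card, card_pos, filter_nonempty_iff]

theorem exists_ne_of_one_lt_houghCount (h : 1 < houghCount r d θ) :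
    ∃ i j, i ≠ j ∧ HoughCovers r θ (d i) ∧ HoughCovers r θ (d j) := by
  classical
  obtain ⟨i, hi, j, hj, hij⟩ := one_lt_card.1 (houghCount_eq_card ▸ h)
  simp only [mem_filter, mem_univ, true_and] at hi hj
  exact ⟨i, j, hij, hi, hj⟩

theorem houghCount_const {p : ℝ × ℝ} (h : HoughCovers r θ p) :
    houghCount r (fun _ : Fin m => p) θ = m := by
  classical
  rw [houghCount_eq_card, filter_true_of_mem fun _ _ => h, card_univ, Fintype.card_fin]

theorem exists_norm_le_of_one_lt_houghCount (hinj : Function.Injective fun i => (d i).1) :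
    ∃ M, ∀ θ, 1 < houghCount r d θ → ‖θ‖ ≤ M := by
  have hbdd : IsBounded (⋃ ij ∈ {ij : Fin m × Fin m | ij.1 ≠ ij.2},
      {θ | HoughCovers r θ (d ij.1) ∧ HoughCovers r θ (d ij.2)}) :=
    (isBounded_biUnion (Set.toFinite _)).2 fun _ hij =>
      isBounded_setOf_houghCovers_pair r (hinj.ne hij)
  obtain ⟨M, hM⟩ := hbdd.exists_norm_le
  refine ⟨M, fun θ hθ => hM θ ?_⟩
  obtain ⟨i, j, hij, hi, hj⟩ := exists_ne_of_one_lt_houghCount hθ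
  exact Set.mem_biUnion (x := (i, j)) hij ⟨hi, hj⟩

end houghCount

theorem IsHoughMaximizer.norm_le {n m k : ℕ} {r M : ℝ} {d : Fin n → ℝ × ℝ}
    {add : Fin m → ℝ × ℝ} {θ : ℝ × ℝ} (hmax : IsHoughMaximizer r d add θ)
    (hM : ∀ θ, 1 < houghCount r d θ → ‖θ‖ ≤ M) (hk : ∃ θ, houghCount r d θ = k)
    (hm : m + 2 ≤ k) : ‖θ‖ ≤ M := by
  obtain ⟨θ₀, hθ₀⟩ := hk
  have hθ₀_le := hmax θ₀
  have hadd : houghCount r add θ ≤ m := houghCount_le_card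
  exact hM θ (by omega)

theorem exists_isHoughMaximizer_lt_norm {n k : ℕ} {r M : ℝ} {d : Fin n → ℝ × ℝ}
    (hM : ∀ θ, 1 < houghCount r d θ → ‖θ‖ ≤ M) (hk : ∀ θ, houghCount r d θ ≤ k)
    (i₀ : Fin n) (R : ℝ) :
    ∃ add : Fin (k - 1) → ℝ × ℝ, ∃ θ, IsHoughMaximizer r d add θ ∧ R < ‖θ‖ := by
  set a := |M| + |r| + |R| + 1
  set b := (d i₀).2 - a * (d i₀).1
  set t := |r| + |M| + |b| + 1
  refine ⟨fun _ => (t, a * t + b), (a, b), fun θ' => ?_, ?_⟩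
  · have hcount : 1 ≤ houghCount r d (a, b) :=
      houghCount_pos_iff.2 ⟨i₀, houghCovers_of_eq (by ring)⟩
    rw [houghCount_const (θ := (a, b)) (houghCovers_of_eq (by dsimp only; ring))]
    have hθ'_le := hk θ'
    have hab_le := hk (a, b)
    rcases Nat.eq_zero_or_pos (houghCount r (fun _ : Fin (k - 1) => (t, a * t + b)) θ') with
      h₀ | hpos
    · omega
    · obtain ⟨-, hfar⟩ := houghCount_pos_iff.1 hpos
      have hd_le : houghCount r d θ' ≤ 1 := by
        by_contra! h
        exact not_houghCovers_of_norm_le (hM θ' h) (by linarith [le_abs_self M, abs_nonneg R])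
          (by linarith [le_abs_self M]) hfar
      have hadd_le : houghCount r (fun _ : Fin (k - 1) => (t, a * t + b)) θ' ≤ k - 1 :=
        houghCount_le_card
      omega
  · calc R ≤ |R| := le_abs_self R
      _ < a := by linarith [abs_nonneg r, abs_nonneg M]
      _ ≤ ‖(a, b)‖ := (le_abs_self a).trans (norm_fst_le (a, b))

theorem hough_addition_breakdown_point_general
    (n : ℕ) (d : Fin n → ℝ × ℝ)
    (hinj : Function.Injective (fun i => (d i).1))
    (r : ℝ) (k : ℕ)
    (hk_ub : ∀ θ : ℝ × ℝ, houghCount r d θ ≤ k)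
    (hk_ex : ∃ θ : ℝ × ℝ, houghCount r d θ = k) :
    (∀ m : ℕ, m + 2 ≤ k → ∃ B : ℝ, ∀ add : Fin m → ℝ × ℝ, ∀ θ : ℝ × ℝ,
      (∀ θ' : ℝ × ℝ, houghCount r d θ' + houghCount r add θ'
          ≤ houghCount r d θ + houghCount r add θ) →
      ‖θ‖ ≤ B) ∧
    (∀ R : ℝ, 0 < R → ∃ add : Fin (k - 1) → ℝ × ℝ, ∃ θ : ℝ × ℝ,
      (∀ θ' : ℝ × ℝ, houghCount r d θ' + houghCount r add θ'
          ≤ houghCount r d θ + houghCount r add θ) ∧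
      R < ‖θ‖) := by
  obtain ⟨M, hM⟩ := exists_norm_le_of_one_lt_houghCount (r := r) hinj
  refine ⟨fun m hm => ⟨M, fun add θ hmax => IsHoughMaximizer.norm_le hmax hM hk_ex hm⟩,
    fun R _ => ?_⟩
  rcases Nat.eq_zero_or_pos k with rfl | hk
  · obtain ⟨θ, hθ⟩ := NormedSpace.exists_lt_norm ℝ (ℝ × ℝ) R
    exact ⟨Fin.elim0, θ, fun θ' => Nat.add_le_add ((hk_ub θ').trans (Nat.zero_le _))
      (houghCount_le_card.trans (Nat.zero_le _)), hθ⟩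
  · obtain ⟨θ₀, hθ₀⟩ := hk_ex
    obtain ⟨i₀, -⟩ := houghCount_pos_iff.1 (hθ₀ ▸ hk)
    exact exists_isHoughMaximizer_lt_norm hM hk_ub i₀ R

/-- The finite-sample addition breakdown point of the Hough transform estimator is
`(k − 1)/(n + k − 1)`, where `k` is the maximal number of data points covered by a
Hough template: (i) adding at most `k − 2` points cannot drive a maximizer of the
combined objective beyond a fixed bound; (ii) adding `k − 1` suitably chosen points
can produce a maximizer of arbitrarily large norm. -/
theorem hough_addition_breakdown_point
    (n : ℕ) (d : Fin n → ℝ × ℝ)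
    (hinj : Function.Injective (fun i => (d i).1))
    (r : ℝ) (hr : 0 < r) (k : ℕ)
    (hk_ub : ∀ θ : ℝ × ℝ, houghCount r d θ ≤ k)
    (hk_ex : ∃ θ : ℝ × ℝ, houghCount r d θ = k) :
    (∀ m : ℕ, m + 2 ≤ k → ∃ B : ℝ, ∀ add : Fin m → ℝ × ℝ, ∀ θ : ℝ × ℝ,
      (∀ θ' : ℝ × ℝ, houghCount r d θ' + houghCount r add θ'
          ≤ houghCount r d θ + houghCount r add θ) →
      ‖θ‖ ≤ B) ∧
    (∀ R : ℝ, 0 < R → ∃ add : Fin (k - 1) → ℝ × ℝ, ∃ θ : ℝ × ℝ,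
      (∀ θ' : ℝ × ℝ, houghCount r d θ' + houghCount r add θ'
          ≤ houghCount r d θ + houghCount r add θ) ∧
      R < ‖θ‖) :=
  hough_addition_breakdown_point_general n d hinj r k hk_ub hk_ex
end

section
/- Under assumptions (a) and (b) on the linear model, for every fixed r > 0 the maximal value of the empirical Hough objective converges almost surely to the maximal value of its deterministic counterpart: sup_{θ ∈ ℝ²} M_{r,n}(θ) → M_r(θ_0) = P{ε² ≤ r²‖Z‖²} almost surely as n → ∞, where Z = (X, 1)^T. -/
/-!
At the true line `θ₀ = (a0, b0)` the empirical objective converges to `M_r(θ₀)` by the strong law;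
this is the lower bound. For the upper bound, the noise law is symmetric and unimodal, so by
Anderson's inequality, applied fibrewise in `X`, no band `houghSet ρ θ` is more likely than
`houghSet ρ θ₀`, and these bands decrease to `houghSet r θ₀` as `ρ ↓ r`. Follow near-maximisers
`θₙ` along an ultrafilter. Inside a large box their Hough sets are eventually covered by a slightly
wider band with rational parameters if `θₙ` converges, by nothing if the lines leave the box, and,
if the slopes diverge, by a thin vertical strip around the limit `C` of their x-intercepts together
with a wider band containing their points above `C`. These covers come from one countable family
on which empirical frequencies converge almost surely, and together with the outside of the box
they have probability less than `M_r(θ₀) + δ`.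
-/

open MeasureTheory ProbabilityTheory Filter Set Topology Metric
open scoped ENNReal

noncomputable def empiricalFreq {α : Type*} (z : ℕ → α) (B : Set α) (n : ℕ) : ℝ :=
  (n : ℝ)⁻¹ * ∑ i ∈ Finset.range n, B.indicator (fun _ => (1 : ℝ)) (z i)

section EmpiricalFreq

variable {α : Type*} (z : ℕ → α)

lemma empiricalFreq_le_one (B : Set α) (n : ℕ) : empiricalFreq z B n ≤ 1 := by
  rcases n.eq_zero_or_pos with rfl | hn
  · simp [empiricalFreq]
  refine inv_mul_le_one_of_le₀ ?_ (Nat.cast_nonneg n)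
  calc ∑ i ∈ Finset.range n, B.indicator (fun _ => (1 : ℝ)) (z i)
      ≤ ∑ _i ∈ Finset.range n, (1 : ℝ) :=
        Finset.sum_le_sum fun _ _ => indicator_le_self' (fun _ _ => zero_le_one) _
    _ = n := by simp

lemma empiricalFreq_mono {B B' : Set α} (h : B ⊆ B') (n : ℕ) :
    empiricalFreq z B n ≤ empiricalFreq z B' n :=
  mul_le_mul_of_nonneg_left
    (Finset.sum_le_sum fun _ _ => indicator_le_indicator_of_subset h (fun _ => zero_le_one) _)
    (by positivity)

lemma empiricalFreq_union_le (B B' : Set α) (n : ℕ) :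
    empiricalFreq z (B ∪ B') n ≤ empiricalFreq z B n + empiricalFreq z B' n := by
  rw [empiricalFreq, empiricalFreq, empiricalFreq, ← mul_add, ← Finset.sum_add_distrib]
  refine mul_le_mul_of_nonneg_left (Finset.sum_le_sum fun i _ => ?_) (by positivity)
  by_cases h : z i ∈ B <;> by_cases h' : z i ∈ B' <;> simp [indicator, h, h']

@[simp] lemma empiricalFreq_empty (n : ℕ) : empiricalFreq z ∅ n = 0 := by
  simp [empiricalFreq]

end EmpiricalFreq

lemma eventually_empiricalFreq_lt_of_subset {α : Type*} {z : ℕ → α} {U : Filter ℕ}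
    (hU : U ≤ atTop) {B : Set α} {p c : ℝ} (hB : Tendsto (empiricalFreq z B) atTop (𝓝 p))
    (hc : p < c) {H : ℕ → Set α}
    (hH : ∀ᶠ n in U, H n ⊆ B) : ∀ᶠ n in U, empiricalFreq z (H n) n < c := by
  filter_upwards [hH, (hB.mono_left hU).eventually_lt_const hc] with n hHn hn
  exact (empiricalFreq_mono z hHn n).trans_lt hn

lemma eventually_empiricalFreq_lt_of_subset_union {α : Type*} {z : ℕ → α} {U : Filter ℕ}
    (hU : U ≤ atTop) {K B : Set α} {pK pB c : ℝ} (hK : Tendsto (empiricalFreq z K) atTop (𝓝 pK))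
    (hB : Tendsto (empiricalFreq z B) atTop (𝓝 pB)) (hc : pK + pB < c)
    {H : ℕ → Set α} (hH : ∀ᶠ n in U, H n ⊆ K ∪ B) :
    ∀ᶠ n in U, empiricalFreq z (H n) n < c := by
  filter_upwards [hH, ((hK.add hB).mono_left hU).eventually_lt_const hc] with n hHn hn
  exact ((empiricalFreq_mono z hHn n).trans (empiricalFreq_union_le z K B n)).trans_lt hn

theorem ae_tendsto_empiricalFreq {Ω α : Type*} [MeasurableSpace Ω] [MeasurableSpace α]
    {μ : Measure Ω} [IsProbabilityMeasure μ] {Z : ℕ → Ω → α} (hZ : ∀ i, Measurable (Z i))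
    (hindep : iIndepFun Z μ) (hident : ∀ i, IdentDistrib (Z i) (Z 0) μ μ)
    {B : Set α} (hB : MeasurableSet B) :
    ∀ᵐ ω ∂μ, Tendsto (empiricalFreq (fun i => Z i ω) B) atTop
      (𝓝 ((μ.map (Z 0)).real B)) := by
  have hφ : Measurable (B.indicator fun _ => (1 : ℝ)) := measurable_const.indicator hB
  have hV : (fun ω => B.indicator (fun _ => (1 : ℝ)) (Z 0 ω)) = (Z 0 ⁻¹' B).indicator 1 := by
    ext ω
    by_cases h : Z 0 ω ∈ B <;> simp [h]
  have hint : Integrable (fun ω => B.indicator (fun _ => (1 : ℝ)) (Z 0 ω)) μ := by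
    rw [hV]
    exact (integrable_const (1 : ℝ)).indicator (hZ 0 hB)
  have hmean : μ[fun ω => B.indicator (fun _ => (1 : ℝ)) (Z 0 ω)] = (μ.map (Z 0)).real B := by
    rw [hV, map_measureReal_apply (hZ 0) hB, integral_indicator_one (hZ 0 hB)]
  filter_upwards [strong_law_ae (fun i ω => B.indicator (fun _ => (1 : ℝ)) (Z i ω)) hint
    (fun i j hij => (hindep.indepFun hij).comp hφ hφ) (fun i => (hident i).comp hφ)] with ω hω
  rw [← hmean]
  exact hω

theorem Filter.eventually_forall_of_forall_ultrafilter {α ι : Type*} {l : Filter α}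
    {p : α → ι → Prop} (h : ∀ U : Ultrafilter α, ↑U ≤ l → ∀ θ : α → ι, ∀ᶠ n in U, p n (θ n)) :
    ∀ᶠ n in l, ∀ i, p n i := by
  by_contra hl
  have hfreq : ∃ᶠ n in l, ∃ i, ¬p n i := by simpa [not_eventually] using hl
  have := frequently_iff_neBot.mp hfreq
  set U := Ultrafilter.of (l ⊓ 𝓟 {n | ∃ i, ¬p n i})
  have hUle : ↑U ≤ l ⊓ 𝓟 {n | ∃ i, ¬p n i} := Ultrafilter.of_le _
  have hbad : ∀ᶠ n in U, ∃ i, ¬p n i := le_principal_iff.mp (hUle.trans inf_le_right)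
  obtain ⟨-, i₀, -⟩ := hbad.exists
  have hchoice : ∀ n, ∃ i, (∃ j, ¬p n j) → ¬p n i := fun n => by
    by_cases hn : ∃ j, ¬p n j
    · exact ⟨hn.choose, fun _ => hn.choose_spec⟩
    · exact ⟨i₀, fun h' => (hn h').elim⟩
  choose θ hθ using hchoice
  obtain ⟨n, hn, hbn⟩ := ((h U (hUle.trans inf_le_left) θ).and hbad).exists
  exact hθ n hbn hn

theorem Ultrafilter.exists_tendsto_or_tendsto_abs_atTop {α : Type*} (U : Ultrafilter α)
    (u : α → ℝ) : (∃ t, Tendsto u U (𝓝 t)) ∨ Tendsto (fun n => |u n|) U atTop := by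
  by_cases hb : ∃ M, ∀ᶠ n in U, |u n| ≤ M
  · obtain ⟨M, hM⟩ := hb
    obtain ⟨t, -, ht⟩ := (isCompact_Icc (a := -M) (b := M)).ultrafilter_le_nhds (U.map u)
      (le_principal_iff.mpr (hM.mono fun n hn => abs_le.mp hn))
    exact Or.inl ⟨t, ht⟩
  · push Not at hb
    exact Or.inr (tendsto_atTop.mpr fun M => (hb M).mono fun _ hn => hn.le)

lemma Filter.Eventually.exists_rat_gt {a : ℝ} {p : ℝ → Prop} (h : ∀ᶠ x in 𝓝[>] a, p x) :
    ∃ q : ℚ, a < q ∧ p q := by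
  obtain ⟨u, hu, hsub⟩ := mem_nhdsGT_iff_exists_Ioo_subset.mp h
  obtain ⟨q, h₁, h₂⟩ := exists_rat_btwn (mem_Ioi.mp hu)
  exact ⟨q, h₁, hsub ⟨h₁, h₂⟩⟩

lemma tendsto_measureReal_biInter_gt {α ι : Type*} [MeasurableSpace α] {μ : Measure α}
    [IsFiniteMeasure μ] [LinearOrder ι] [TopologicalSpace ι] [OrderTopology ι]
    [FirstCountableTopology ι] [NoMaxOrder ι] {s : ι → Set α} {a : ι}
    (hs : ∀ r > a, NullMeasurableSet (s r) μ) (hm : ∀ i j, a < i → i ≤ j → s i ⊆ s j) :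
    Tendsto (fun r => μ.real (s r)) (𝓝[>] a) (𝓝 (μ.real (⋂ r > a, s r))) := by
  obtain ⟨b, hb⟩ := exists_gt a
  exact (ENNReal.tendsto_toReal (measure_ne_top μ _)).comp
    (tendsto_measure_biInter_gt hs hm ⟨b, hb, measure_ne_top μ _⟩)

lemma exists_nat_measureReal_compl_closedBall_lt {α : Type*} [PseudoMetricSpace α]
    [MeasurableSpace α] [OpensMeasurableSpace α] (μ : Measure α) [IsFiniteMeasure μ] (x : α)
    {η : ℝ} (hη : 0 < η) : ∃ T : ℕ, μ.real (closedBall x T)ᶜ < η := by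
  have h := tendsto_measure_iInter_atTop (μ := μ) (s := fun T : ℕ => (closedBall x T)ᶜ)
    (fun T => measurableSet_closedBall.compl.nullMeasurableSet)
    (fun i j hij => compl_subset_compl.mpr (closedBall_subset_closedBall (by exact_mod_cast hij)))
    ⟨0, measure_ne_top μ _⟩
  rw [← compl_iUnion, iUnion_closedBall_nat, compl_univ, measure_empty] at h
  exact (((ENNReal.tendsto_toReal ENNReal.zero_ne_top).comp h).eventually_lt_const
    (by simpa using hη)).exists

lemma eventually_measureReal_preimage_punctured_lt {α : Type*} [MeasurableSpace α]
    (μ : Measure α) [IsFiniteMeasure μ] {f : α → ℝ} (hf : Measurable f) (C : ℝ) {η : ℝ}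
    (hη : 0 < η) : ∀ᶠ w in 𝓝[>] 0, μ.real (f ⁻¹' (Ioo (C - w) (C + w) \ {C})) < η := by
  have hempty : ⋂ w > (0 : ℝ), f ⁻¹' (Ioo (C - w) (C + w) \ {C}) = ∅ := by
    refine eq_empty_of_forall_notMem fun a ha => ?_
    simp only [mem_iInter, mem_preimage, Set.mem_sdiff, mem_Ioo, mem_singleton_iff] at ha
    have hne : f a - C ≠ 0 := sub_ne_zero.mpr (ha 1 one_pos).2
    obtain ⟨⟨h₁, h₂⟩, -⟩ := ha |f a - C| (abs_pos.mpr hne)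
    cases abs_cases (f a - C) <;> linarith
  have h := tendsto_measureReal_biInter_gt (μ := μ) (a := 0)
    (s := fun w => f ⁻¹' (Ioo (C - w) (C + w) \ {C}))
    (fun w _ => (hf (measurableSet_Ioo.diff (measurableSet_singleton C))).nullMeasurableSet)
    (fun i j _ hij =>
      preimage_mono (sdiff_subset_sdiff_left (Ioo_subset_Ioo (by linarith) (by linarith))))
  rw [hempty, measureReal_empty] at h
  exact h.eventually_lt_const hη

theorem withDensity_Icc_le_Icc_of_abs_le {g : ℝ → ℝ≥0∞}
    (hg : ∀ x y : ℝ, |x| ≤ |y| → g y ≤ g x) (c L : ℝ) :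
    volume.withDensity g (Icc (c - L) (c + L)) ≤ volume.withDensity g (Icc (-L) L) := by
  set S := Icc (c - L) (c + L)
  set I := Icc (-L) L
  -- the reflection `x ↦ c - x` maps `S \ I` into `I \ S` and moves every point towards the mode
  have hmaps : S \ I ⊆ (fun x => c - x) ⁻¹' (I \ S) := by
    rintro x ⟨⟨h₁, h₂⟩, hx⟩
    simp only [S, I, mem_preimage, Set.mem_sdiff, mem_Icc, not_and_or, not_le] at hx ⊢
    refine ⟨⟨by linarith, by linarith⟩, ?_⟩
    rcases hx with hx | hx
    · right; linarith
    · left; linarith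
  have hcloser : ∀ x ∈ S \ I, g x ≤ g (c - x) := by
    rintro x ⟨⟨h₁, h₂⟩, hx⟩
    simp only [I, mem_Icc, not_and_or, not_le] at hx
    have hL : L < |x| := by
      rcases hx with hx | hx
      · linarith [neg_le_abs x]
      · linarith [le_abs_self x]
    exact hg _ _ ((abs_le.mpr ⟨by linarith, by linarith⟩).trans hL.le)
  have hdiff : volume.withDensity g (S \ I) ≤ volume.withDensity g (I \ S) := by
    have hS : MeasurableSet S := measurableSet_Icc
    have hI : MeasurableSet I := measurableSet_Icc
    rw [withDensity_apply _ (hS.diff hI), withDensity_apply _ (hI.diff hS)]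
    calc ∫⁻ x in S \ I, g x ≤ ∫⁻ x in S \ I, g (c - x) := setLIntegral_mono' (hS.diff hI) hcloser
      _ = ∫⁻ x in (fun x => c - x) '' (S \ I), g x :=
        (Measure.measurePreserving_sub_left volume c).setLIntegral_comp_emb
          (MeasurableEquiv.subLeft c).measurableEmbedding g _
      _ ≤ ∫⁻ x in I \ S, g x := lintegral_mono_set (image_subset_iff.mpr hmaps)
  calc volume.withDensity g S
      = volume.withDensity g (S ∩ I) + volume.withDensity g (S \ I) :=
        (measure_inter_add_sdiff S measurableSet_Icc).symm
    _ ≤ volume.withDensity g (I ∩ S) + volume.withDensity g (I \ S) := by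
        rw [inter_comm]; gcongr
    _ = volume.withDensity g I := measure_inter_add_sdiff I measurableSet_Icc

lemma apply_le_apply_of_abs_le {f : ℝ → ℝ} (hsymm : ∀ x, f x = f (-x))
    (hmode : ∀ x, x ≠ 0 → f x < f 0) (hanti : StrictAntiOn f (Ioi 0)) {x y : ℝ}
    (hxy : |x| ≤ |y|) : f y ≤ f x := by
  have heven : ∀ x, f |x| = f x := fun x => by
    rcases abs_choice x with h | h <;> rw [h]
    exact (hsymm x).symm
  rw [← heven x, ← heven y]
  rcases (abs_nonneg x).eq_or_lt with h₀ | h₀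
  · rw [← h₀]
    rcases (abs_nonneg y).eq_or_lt with h₁ | h₁
    · rw [← h₁]
    · exact (hmode _ h₁.ne').le
  · rcases hxy.eq_or_lt with h | h
    · rw [h]
    · exact (hanti h₀ (h₀.trans h) h).le

def houghSet (r : ℝ) (θ : ℝ × ℝ) : Set (ℝ × ℝ) :=
  {p : ℝ × ℝ | |p.1 * θ.1 + θ.2 - p.2| ^ 2 ≤ r ^ 2 * (p.1 ^ 2 + 1)}

lemma measurableSet_houghSet (r : ℝ) (θ : ℝ × ℝ) : MeasurableSet (houghSet r θ) :=
  measurableSet_le (by fun_prop) (by fun_prop)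

lemma mem_houghSet_iff {r : ℝ} {θ p : ℝ × ℝ} :
    p ∈ houghSet r θ ↔ |p.1 * θ.1 + θ.2 - p.2| ≤ |r| * √(p.1 ^ 2 + 1) := by
  rw [← sq_le_sq₀ (abs_nonneg _) (by positivity), mul_pow, sq_abs r,
    Real.sq_sqrt (by positivity)]
  rfl

lemma houghSet_mono {r ρ : ℝ} (hr : 0 ≤ r) (hrρ : r ≤ ρ) (θ : ℝ × ℝ) :
    houghSet r θ ⊆ houghSet ρ θ := fun p hp => by
  rw [mem_houghSet_iff, abs_of_nonneg hr] at hp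
  rw [mem_houghSet_iff, abs_of_nonneg (hr.trans hrρ)]
  exact hp.trans (by gcongr)

lemma biInter_gt_houghSet {r : ℝ} (hr : 0 ≤ r) (θ : ℝ × ℝ) :
    ⋂ ρ > r, houghSet ρ θ = houghSet r θ := by
  refine Subset.antisymm (fun p hp => ?_) fun p hp => mem_biInter fun ρ hρ =>
    houghSet_mono hr (le_of_lt hρ) θ hp
  have hlim : Tendsto (fun ρ : ℝ => ρ ^ 2 * (p.1 ^ 2 + 1)) (𝓝[>] r) (𝓝 (r ^ 2 * (p.1 ^ 2 + 1))) :=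
    ((continuous_pow 2).mul continuous_const).continuousAt.tendsto.mono_left nhdsWithin_le_nhds
  exact ge_of_tendsto hlim (eventually_nhdsWithin_of_forall fun ρ hρ => mem_iInter₂.mp hp ρ hρ)

lemma abs_mul_fst_add_le_of_mem {r T : ℝ} (hr : 0 ≤ r) {θ p : ℝ × ℝ}
    (hp : p ∈ houghSet r θ ∩ closedBall 0 T) : |θ.1 * p.1 + θ.2| ≤ r * (T + 1) + T := by
  obtain ⟨hH, hB⟩ := hp
  rw [mem_houghSet_iff, abs_of_nonneg hr] at hH
  have hx : |p.1| ≤ T := (norm_fst_le p).trans (mem_closedBall_zero_iff.mp hB)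
  have hy : |p.2| ≤ T := (norm_snd_le p).trans (mem_closedBall_zero_iff.mp hB)
  have hsqrt : √(p.1 ^ 2 + 1) ≤ T + 1 :=
    Real.sqrt_le_iff.mpr ⟨by linarith [abs_nonneg p.1], by nlinarith [sq_abs p.1, abs_nonneg p.1]⟩
  calc |θ.1 * p.1 + θ.2| = |(p.1 * θ.1 + θ.2 - p.2) + p.2| := by ring_nf
    _ ≤ |p.1 * θ.1 + θ.2 - p.2| + |p.2| := abs_add_le _ _
    _ ≤ r * (T + 1) + T := by gcongr; exact hH.trans (by gcongr)

lemma mem_houghSet_of_abs_le {r ρ : ℝ} (hr : 0 ≤ r) {θ θ' p : ℝ × ℝ} (hp : p ∈ houghSet r θ)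
    (h : |p.1 * (θ.1 - θ'.1) + (θ.2 - θ'.2)| ≤ ρ - r) : p ∈ houghSet ρ θ' := by
  rw [mem_houghSet_iff, abs_of_nonneg hr] at hp
  have hρ : 0 ≤ ρ - r := (abs_nonneg _).trans h
  have hsqrt : 1 ≤ √(p.1 ^ 2 + 1) := Real.one_le_sqrt.mpr (le_add_of_nonneg_left (sq_nonneg _))
  rw [mem_houghSet_iff, abs_of_nonneg (a := ρ) (by linarith)]
  calc |p.1 * θ'.1 + θ'.2 - p.2|
      = |(p.1 * θ.1 + θ.2 - p.2) - (p.1 * (θ.1 - θ'.1) + (θ.2 - θ'.2))| := by ring_nf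
    _ ≤ |p.1 * θ.1 + θ.2 - p.2| + |p.1 * (θ.1 - θ'.1) + (θ.2 - θ'.2)| := abs_sub _ _
    _ ≤ r * √(p.1 ^ 2 + 1) + (ρ - r) * √(p.1 ^ 2 + 1) := by gcongr; nlinarith
    _ = ρ * √(p.1 ^ 2 + 1) := by ring

theorem map_prod_houghSet_le {μX ν : Measure ℝ} [SFinite ν]
    (hν : ∀ c L : ℝ, ν (Icc (c - L) (c + L)) ≤ ν (Icc (-L) L)) (a₀ b₀ ρ : ℝ) (θ : ℝ × ℝ) :
    (μX.prod ν).map (fun q => (q.1, a₀ * q.1 + b₀ + q.2)) (houghSet ρ θ)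
      ≤ (μX.prod ν).map (fun q => (q.1, a₀ * q.1 + b₀ + q.2)) (houghSet ρ (a₀, b₀)) := by
  set g : ℝ × ℝ → ℝ × ℝ := fun q => (q.1, a₀ * q.1 + b₀ + q.2)
  have hg : Measurable g := by fun_prop
  have hH : ∀ θ', MeasurableSet (g ⁻¹' houghSet ρ θ') := fun θ' => hg (measurableSet_houghSet ρ θ')
  rw [Measure.map_apply hg (measurableSet_houghSet ρ θ), Measure.map_apply hg
    (measurableSet_houghSet ρ _), Measure.prod_apply (hH θ), Measure.prod_apply (hH _)]
  refine lintegral_mono fun x => ?_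
  set L := |ρ| * √(x ^ 2 + 1)
  have hfibre : ∀ θ' : ℝ × ℝ, Prod.mk x ⁻¹' (g ⁻¹' houghSet ρ θ') =
      Icc ((x * θ'.1 + θ'.2 - a₀ * x - b₀) - L) ((x * θ'.1 + θ'.2 - a₀ * x - b₀) + L) := by
    intro θ'
    ext e
    simp only [g, mem_preimage, mem_houghSet_iff, mem_Icc, abs_le]
    constructor <;> rintro ⟨h₁, h₂⟩ <;> constructor <;> linarith
  calc ν (Prod.mk x ⁻¹' (g ⁻¹' houghSet ρ θ))
      = ν (Icc ((x * θ.1 + θ.2 - a₀ * x - b₀) - L) ((x * θ.1 + θ.2 - a₀ * x - b₀) + L)) := by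
        rw [hfibre]
    _ ≤ ν (Icc (-L) L) := hν _ _
    _ = ν (Prod.mk x ⁻¹' (g ⁻¹' houghSet ρ (a₀, b₀))) := by rw [hfibre]; ring_nf

theorem map_houghSet_le_of_indepFun {Ω : Type*} [MeasurableSpace Ω] {μ : Measure Ω}
    [IsFiniteMeasure μ] {X e : Ω → ℝ} (hX : Measurable X) (he : Measurable e)
    (hXe : IndepFun X e μ)
    (hpeak : ∀ c L : ℝ, μ.map e (Icc (c - L) (c + L)) ≤ μ.map e (Icc (-L) L)) (a b ρ : ℝ)
    (θ : ℝ × ℝ) :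
    μ.map (fun ω => (X ω, a * X ω + b + e ω)) (houghSet ρ θ)
      ≤ μ.map (fun ω => (X ω, a * X ω + b + e ω)) (houghSet ρ (a, b)) := by
  have hlaw : μ.map (fun ω => (X ω, a * X ω + b + e ω)) =
      ((μ.map X).prod (μ.map e)).map fun q => (q.1, a * q.1 + b + q.2) := by
    rw [← (indepFun_iff_map_prod_eq_prod_map_map hX.aemeasurable he.aemeasurable).mp hXe,
      Measure.map_map (by fun_prop) (hX.prodMk he)]
    rfl
  rw [hlaw]
  exact map_prod_houghSet_le hpeak a b ρ θ

/-- Only countably many vertical lines `{x = C}` carry mass, and punctured strips are needed around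
those alone. -/
def houghBrackets (P : Measure (ℝ × ℝ)) : Set (Set (ℝ × ℝ)) :=
  range (fun T : ℕ => (closedBall (0 : ℝ × ℝ) T)ᶜ) ∪
    range (fun q : ℚ × ℚ × ℚ => houghSet q.1 (q.2.1, q.2.2)) ∪
    range (fun q : ℚ × ℚ => Prod.fst ⁻¹' Ioo (q.1 : ℝ) q.2) ∪
    ⋃ C ∈ {C : ℝ | 0 < P {p | p.1 = C}},
      range (fun q : ℚ × ℚ => Prod.fst ⁻¹' (Ioo (q.1 : ℝ) q.2 \ {C}))

lemma countable_houghBrackets (P : Measure (ℝ × ℝ)) [SFinite P] :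
    (houghBrackets P).Countable :=
  (((countable_range _).union (countable_range _)).union (countable_range _)).union
    ((Measure.countable_meas_level_set_pos measurable_fst).biUnion fun _ _ => countable_range _)

lemma measurableSet_of_mem_houghBrackets {P : Measure (ℝ × ℝ)} {B : Set (ℝ × ℝ)}
    (hB : B ∈ houghBrackets P) : MeasurableSet B := by
  simp only [houghBrackets, mem_union, mem_iUnion, mem_range] at hB
  rcases hB with ((⟨T, rfl⟩ | ⟨q, rfl⟩) | ⟨q, rfl⟩) | ⟨C, -, q, rfl⟩
  · exact measurableSet_closedBall.compl
  · exact measurableSet_houghSet _ _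
  · exact measurable_fst measurableSet_Ioo
  · exact measurable_fst (measurableSet_Ioo.diff (measurableSet_singleton C))

lemma compl_closedBall_mem_houghBrackets (P : Measure (ℝ × ℝ)) (T : ℕ) :
    (closedBall (0 : ℝ × ℝ) T)ᶜ ∈ houghBrackets P :=
  mem_union_left _ (mem_union_left _ (mem_union_left _ ⟨T, rfl⟩))

lemma houghSet_mem_houghBrackets (P : Measure (ℝ × ℝ)) (ρ α β : ℚ) :
    houghSet ρ (α, β) ∈ houghBrackets P :=
  mem_union_left _ (mem_union_left _ (mem_union_right _ ⟨(ρ, α, β), rfl⟩))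

lemma exists_mem_houghBrackets_punctured_strip (P : Measure (ℝ × ℝ)) [IsFiniteMeasure P]
    (C : ℝ) {η : ℝ} (hη : 0 < η) :
    ∃ q₁ q₂ : ℚ, (q₁ : ℝ) < C ∧ C < q₂ ∧
      ∃ K ∈ houghBrackets P, Prod.fst ⁻¹' (Ioo (q₁ : ℝ) q₂ \ {C}) ⊆ K ∧ P.real K < η := by
  obtain ⟨w, hPw, hw⟩ := ((eventually_measureReal_preimage_punctured_lt P measurable_fst C hη).and
    self_mem_nhdsWithin).exists
  obtain ⟨q₁, hq₁, hq₁C⟩ := exists_rat_btwn (show C - w < C by linarith)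
  obtain ⟨q₂, hCq₂, hq₂⟩ := exists_rat_btwn (show C < C + w by linarith)
  have hsub : Prod.fst ⁻¹' (Ioo (q₁ : ℝ) q₂ \ {C}) ⊆
      (Prod.fst ⁻¹' (Ioo (C - w) (C + w) \ {C}) : Set (ℝ × ℝ)) :=
    preimage_mono (sdiff_subset_sdiff_left (Ioo_subset_Ioo hq₁.le hq₂.le))
  refine ⟨q₁, q₂, hq₁C, hCq₂, ?_⟩
  by_cases hC : 0 < P {p | p.1 = C}
  · refine ⟨_, ?_, subset_rfl, (measureReal_mono hsub).trans_lt hPw⟩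
    exact mem_union_right _ (mem_biUnion hC ⟨(q₁, q₂), rfl⟩)
  · refine ⟨Prod.fst ⁻¹' Ioo (q₁ : ℝ) q₂, mem_union_left _ (mem_union_right _ ⟨(q₁, q₂), rfl⟩),
      preimage_mono sdiff_subset, ?_⟩
    have hnull : P.real {p | p.1 = C} = 0 := by
      simp [Measure.real, nonpos_iff_eq_zero.mp (not_lt.mp hC)]
    calc P.real (Prod.fst ⁻¹' Ioo (q₁ : ℝ) q₂)
        ≤ P.real (Prod.fst ⁻¹' (Ioo (C - w) (C + w) \ {C}) ∪ {p | p.1 = C}) := by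
          refine measureReal_mono fun p hp => ?_
          by_cases hpC : p.1 = C
          · exact Or.inr hpC
          · exact Or.inl (hsub ⟨hp, hpC⟩)
      _ ≤ P.real (Prod.fst ⁻¹' (Ioo (C - w) (C + w) \ {C})) + P.real {p | p.1 = C} :=
          measureReal_union_le _ _
      _ < η := by rwa [hnull, add_zero]

section Pathwise

variable {z : ℕ → ℝ × ℝ} {P : Measure (ℝ × ℝ)} {r T : ℝ} {U : Ultrafilter ℕ} {θ : ℕ → ℝ × ℝ}

lemma eventually_forall_measureReal_houghSet_lt [IsFiniteMeasure P] (hr : 0 ≤ r) {θ₀ : ℝ × ℝ}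
    (hmax : ∀ ρ θ, P (houghSet ρ θ) ≤ P (houghSet ρ θ₀)) {c : ℝ}
    (hc : P.real (houghSet r θ₀) < c) : ∀ᶠ ρ in 𝓝[>] r, ∀ θ, P.real (houghSet ρ θ) < c := by
  have hlim := tendsto_measureReal_biInter_gt (μ := P) (a := r) (s := fun ρ => houghSet ρ θ₀)
    (fun ρ _ => (measurableSet_houghSet ρ θ₀).nullMeasurableSet)
    (fun i j hi hij => houghSet_mono (hr.trans hi.le) hij θ₀)
  rw [biInter_gt_houghSet hr] at hlim
  filter_upwards [hlim.eventually_lt_const hc] with ρ hρ θ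
  exact (ENNReal.toReal_mono (measure_ne_top P _) (hmax ρ θ)).trans_lt hρ

lemma eventually_empiricalFreq_houghSet_inter_lt_of_tendsto (hU : (U : Filter ℕ) ≤ atTop)
    (hr : 0 ≤ r)
    (hz : ∀ B ∈ houghBrackets P, Tendsto (empiricalFreq z B) atTop (𝓝 (P.real B)))
    {c : ℝ} (hband : ∀ᶠ ρ in 𝓝[>] r, ∀ θ', P.real (houghSet ρ θ') < c)
    {θ₀ : ℝ × ℝ} (hθ : Tendsto θ U (𝓝 θ₀)) :
    ∀ᶠ n in U, empiricalFreq z (houghSet r (θ n) ∩ closedBall 0 T) n < c := by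
  obtain ⟨ρ, hrρ, hρ⟩ := hband.exists_rat_gt
  set η := (ρ - r) / (2 * (|T| + 1))
  have hη : 0 < η := div_pos (sub_pos.mpr hrρ) (by positivity)
  obtain ⟨α, hα, hα'⟩ := exists_rat_btwn (show θ₀.1 - η < θ₀.1 by linarith)
  obtain ⟨β, hβ, hβ'⟩ := exists_rat_btwn (show θ₀.2 - η < θ₀.2 by linarith)
  refine eventually_empiricalFreq_lt_of_subset hU
    (hz _ (houghSet_mem_houghBrackets P ρ α β)) (hρ (α, β)) ?_
  filter_upwards [Metric.tendsto_nhds.mp hθ η hη] with n hn p hp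
  rw [Prod.dist_eq, max_lt_iff, Real.dist_eq, Real.dist_eq] at hn
  have ha := abs_lt.mp hn.1
  have hb := abs_lt.mp hn.2
  have hx : |p.1| ≤ |T| := ((norm_fst_le p).trans (mem_closedBall_zero_iff.mp hp.2)).trans
    (le_abs_self T)
  refine mem_houghSet_of_abs_le hr hp.1 ?_
  calc |p.1 * ((θ n).1 - α) + ((θ n).2 - β)| ≤ |p.1| * |(θ n).1 - α| + |(θ n).2 - β| := by
        rw [← abs_mul]; exact abs_add_le _ _
    _ ≤ |T| * (2 * η) + 2 * η := by
        gcongr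
        · exact abs_le.mpr ⟨by linarith, by linarith⟩
        · exact abs_le.mpr ⟨by linarith, by linarith⟩
    _ = ρ - r := by simp only [η]; field_simp

lemma eventually_houghSet_inter_closedBall_eq_empty_of_tendsto_abs_snd (hr : 0 ≤ r) {A : ℝ}
    (ha : Tendsto (fun n => (θ n).1) U (𝓝 A)) (hb : Tendsto (fun n => |(θ n).2|) U atTop) :
    ∀ᶠ n in U, houghSet r (θ n) ∩ closedBall 0 T = ∅ := by
  filter_upwards [Metric.tendsto_nhds.mp ha 1 one_pos,
    hb.eventually_gt_atTop (r * (T + 1) + T + (|A| + 1) * T)] with n hn hbn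
  refine eq_empty_of_forall_notMem fun p hp => ?_
  have hline := abs_mul_fst_add_le_of_mem hr hp
  have hx : |p.1| ≤ T := (norm_fst_le p).trans (mem_closedBall_zero_iff.mp hp.2)
  have ha' : |(θ n).1| ≤ |A| + 1 := by
    rw [Real.dist_eq] at hn
    linarith [abs_sub_abs_le_abs_sub (θ n).1 A]
  have hb' : |(θ n).2| ≤ |(θ n).1 * p.1 + (θ n).2| + |(θ n).1| * |p.1| := by
    rw [← abs_mul]
    calc |(θ n).2| = |((θ n).1 * p.1 + (θ n).2) - (θ n).1 * p.1| := by ring_nf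
      _ ≤ _ := abs_sub _ _
  nlinarith [mul_le_mul ha' hx (abs_nonneg _) (by positivity)]

lemma eventually_abs_fst_sub_root_lt (hr : 0 ≤ r) (ha : Tendsto (fun n => |(θ n).1|) U atTop)
    {w : ℝ} (hw : 0 < w) :
    ∀ᶠ n in U, ∀ p ∈ houghSet r (θ n) ∩ closedBall 0 T, |p.1 - -(θ n).2 / (θ n).1| < w := by
  filter_upwards [ha.eventually_gt_atTop ((r * (T + 1) + T) / w)] with n hn p hp
  have hline := abs_mul_fst_add_le_of_mem hr hp
  have hT : 0 ≤ T := (abs_nonneg _).trans ((norm_fst_le p).trans (mem_closedBall_zero_iff.mp hp.2))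
  have ha0 : 0 < |(θ n).1| := lt_of_le_of_lt (by positivity) hn
  have hroot : |p.1 - -(θ n).2 / (θ n).1| = |(θ n).1 * p.1 + (θ n).2| / |(θ n).1| := by
    rw [eq_div_iff ha0.ne', ← abs_mul]
    congr 1
    field_simp [abs_pos.mp ha0]
    ring
  rw [hroot, div_lt_iff₀ ha0]
  rw [div_lt_iff₀ hw] at hn
  linarith

lemma eventually_houghSet_inter_closedBall_eq_empty_of_tendsto_abs_root (hr : 0 ≤ r)
    (ha : Tendsto (fun n => |(θ n).1|) U atTop)
    (hroot : Tendsto (fun n => |-(θ n).2 / (θ n).1|) U atTop) :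
    ∀ᶠ n in U, houghSet r (θ n) ∩ closedBall 0 T = ∅ := by
  filter_upwards [eventually_abs_fst_sub_root_lt hr ha one_pos,
    hroot.eventually_gt_atTop (T + 1)] with n hn hrootn
  refine eq_empty_of_forall_notMem fun p hp => ?_
  have hx : |p.1| ≤ T := (norm_fst_le p).trans (mem_closedBall_zero_iff.mp hp.2)
  linarith [hn p hp, abs_sub_abs_le_abs_sub (-(θ n).2 / (θ n).1) p.1,
    abs_sub_comm p.1 (-(θ n).2 / (θ n).1)]

lemma exists_rat_eventually_mem_houghSet_of_fst_eq (hr : 0 ≤ r) {ρ : ℝ} (hrρ : r < ρ) (C : ℝ) :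
    ∃ t : ℚ, ∀ᶠ n in U, ∀ p ∈ houghSet r (θ n) ∩ closedBall 0 T, p.1 = C →
      p ∈ houghSet ρ (0, t) := by
  rcases U.exists_tendsto_or_tendsto_abs_atTop (fun n => (θ n).1 * C + (θ n).2) with
    ⟨t₀, ht₀⟩ | hfar
  · obtain ⟨t, ht, ht'⟩ := exists_rat_btwn (show t₀ - (ρ - r) / 2 < t₀ by linarith)
    refine ⟨t, ?_⟩
    filter_upwards [Metric.tendsto_nhds.mp ht₀ _ (half_pos (sub_pos.mpr hrρ))] with n hn p hp hpC
    rw [Real.dist_eq] at hn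
    refine mem_houghSet_of_abs_le hr hp.1 ?_
    rw [hpC]
    exact abs_le.mpr ⟨by linarith [abs_lt.mp hn], by linarith [abs_lt.mp hn]⟩
  · refine ⟨0, ?_⟩
    filter_upwards [hfar.eventually_gt_atTop (r * (T + 1) + T)] with n hn p hp hpC
    have hline := abs_mul_fst_add_le_of_mem hr hp
    rw [hpC] at hline
    exact absurd hline (not_le.mpr hn)

lemma eventually_empiricalFreq_houghSet_inter_lt_of_tendsto_root [IsFiniteMeasure P]
    (hU : (U : Filter ℕ) ≤ atTop) (hr : 0 ≤ r)
    (hz : ∀ B ∈ houghBrackets P, Tendsto (empiricalFreq z B) atTop (𝓝 (P.real B)))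
    {c₁ c₂ : ℝ} (hc₁ : 0 < c₁) (hband : ∀ᶠ ρ in 𝓝[>] r, ∀ θ', P.real (houghSet ρ θ') < c₂)
    (ha : Tendsto (fun n => |(θ n).1|) U atTop) {C : ℝ}
    (hC : Tendsto (fun n => -(θ n).2 / (θ n).1) U (𝓝 C)) :
    ∀ᶠ n in U, empiricalFreq z (houghSet r (θ n) ∩ closedBall 0 T) n < c₁ + c₂ := by
  obtain ⟨q₁, q₂, hq₁, hq₂, K, hK, hKsub, hKlt⟩ :=
    exists_mem_houghBrackets_punctured_strip P C hc₁
  obtain ⟨ρ, hrρ, hρ⟩ := hband.exists_rat_gt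
  obtain ⟨t, ht⟩ :=
    exists_rat_eventually_mem_houghSet_of_fst_eq (U := U) (θ := θ) (T := T) hr hrρ C
  have hw : 0 < min (C - q₁) (q₂ - C) := lt_min (by linarith) (by linarith)
  have hband_mem : houghSet ρ (0, t) ∈ houghBrackets P := by
    simpa using houghSet_mem_houghBrackets P ρ 0 t
  refine eventually_empiricalFreq_lt_of_subset_union hU (hz K hK) (hz _ hband_mem)
    (add_lt_add hKlt (hρ (0, t))) ?_
  filter_upwards [ht, eventually_abs_fst_sub_root_lt hr ha (half_pos hw),
    Metric.tendsto_nhds.mp hC _ (half_pos hw)] with n hcol hloc hCn p hp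
  by_cases hpC : p.1 = C
  · exact Or.inr (hcol p hp hpC)
  · refine Or.inl (hKsub ⟨?_, hpC⟩)
    rw [Real.dist_eq] at hCn
    have h₁ := abs_lt.mp (hloc p hp)
    have h₂ := abs_lt.mp hCn
    have h₃ := min_le_left (C - q₁) (q₂ - C)
    have h₄ := min_le_right (C - q₁) (q₂ - C)
    exact ⟨by linarith, by linarith⟩

theorem eventually_empiricalFreq_houghSet_inter_lt [IsFiniteMeasure P]
    (hU : (U : Filter ℕ) ≤ atTop) (hr : 0 ≤ r)
    (hz : ∀ B ∈ houghBrackets P, Tendsto (empiricalFreq z B) atTop (𝓝 (P.real B)))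
    {c₁ c₂ : ℝ} (hc₁ : 0 < c₁) (hband : ∀ᶠ ρ in 𝓝[>] r, ∀ θ', P.real (houghSet ρ θ') < c₂)
    (θ : ℕ → ℝ × ℝ) :
    ∀ᶠ n in U, empiricalFreq z (houghSet r (θ n) ∩ closedBall 0 T) n < c₁ + c₂ := by
  have hc₂ : 0 < c₂ := by
    obtain ⟨ρ, hρ⟩ := hband.exists
    exact measureReal_nonneg.trans_lt (hρ 0)
  have of_empty : (∀ᶠ n in U, houghSet r (θ n) ∩ closedBall 0 T = ∅) →
      ∀ᶠ n in U, empiricalFreq z (houghSet r (θ n) ∩ closedBall 0 T) n < c₁ + c₂ :=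
    fun h => h.mono fun n hn => by rw [hn, empiricalFreq_empty]; positivity
  rcases U.exists_tendsto_or_tendsto_abs_atTop (fun n => (θ n).1) with ⟨A, hA⟩ | ha
  · rcases U.exists_tendsto_or_tendsto_abs_atTop (fun n => (θ n).2) with ⟨B, hB⟩ | hb
    · exact (eventually_empiricalFreq_houghSet_inter_lt_of_tendsto hU hr hz hband
        (hA.prodMk_nhds hB)).mono fun n hn => hn.trans (lt_add_of_pos_left _ hc₁)
    · exact of_empty
        (eventually_houghSet_inter_closedBall_eq_empty_of_tendsto_abs_snd hr hA hb)
  · rcases U.exists_tendsto_or_tendsto_abs_atTop (fun n => -(θ n).2 / (θ n).1) with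
      ⟨C, hC⟩ | hroot
    · exact eventually_empiricalFreq_houghSet_inter_lt_of_tendsto_root hU hr hz hc₁ hband ha hC
    · exact of_empty
        (eventually_houghSet_inter_closedBall_eq_empty_of_tendsto_abs_root hr ha hroot)

theorem tendsto_iSup_empiricalFreq_houghSet [IsFiniteMeasure P] (hr : 0 ≤ r) {θ₀ : ℝ × ℝ}
    (hmax : ∀ ρ θ, P (houghSet ρ θ) ≤ P (houghSet ρ θ₀))
    (hz : ∀ B ∈ houghBrackets P, Tendsto (empiricalFreq z B) atTop (𝓝 (P.real B)))
    (hz₀ : Tendsto (empiricalFreq z (houghSet r θ₀)) atTop (𝓝 (P.real (houghSet r θ₀)))) :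
    Tendsto (fun n => ⨆ θ, empiricalFreq z (houghSet r θ) n) atTop
      (𝓝 (P.real (houghSet r θ₀))) := by
  set m := P.real (houghSet r θ₀)
  have hbdd : ∀ n, BddAbove (range fun θ => empiricalFreq z (houghSet r θ) n) :=
    fun n => ⟨1, forall_mem_range.mpr fun θ => empiricalFreq_le_one z _ n⟩
  refine tendsto_order.mpr ⟨fun a ha => ?_, fun a ha => ?_⟩
  · filter_upwards [hz₀.eventually_const_lt ha] with n hn
    exact hn.trans_le (le_ciSup (hbdd n) θ₀)
  set δ := (a - m) / 4
  have hδ : 0 < δ := div_pos (sub_pos.mpr ha) four_pos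
  obtain ⟨T, hT⟩ := exists_nat_measureReal_compl_closedBall_lt P 0 hδ
  have hband := eventually_forall_measureReal_houghSet_lt hr hmax (lt_add_of_pos_right m hδ)
  have hK := hz _ (compl_closedBall_mem_houghBrackets P T)
  have hsmall : ∀ᶠ n in atTop, ∀ θ, empiricalFreq z (houghSet r θ) n < m + 3 * δ := by
    refine eventually_forall_of_forall_ultrafilter fun U hU θ => ?_
    filter_upwards [hU (hK.eventually_lt_const hT),
      eventually_empiricalFreq_houghSet_inter_lt (T := T) hU hr hz hδ hband θ] with n h₁ h₂
    calc empiricalFreq z (houghSet r (θ n)) n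
        ≤ empiricalFreq z ((closedBall 0 T)ᶜ ∪ houghSet r (θ n) ∩ closedBall 0 T) n :=
          empiricalFreq_mono z (fun p hp => by
            by_cases h : p ∈ closedBall (0 : ℝ × ℝ) T <;> simp_all) n
      _ ≤ _ := empiricalFreq_union_le z _ _ n
      _ < δ + (δ + (m + δ)) := add_lt_add h₁ h₂
      _ = m + 3 * δ := by ring
  have ha' : m + 3 * δ < a := by simp only [δ]; linarith
  filter_upwards [hsmall] with n hn
  exact (ciSup_le fun θ => (hn θ).le).trans_lt ha'

end Pathwise

theorem hough_max_value_strong_convergence_general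
    {Ω : Type*} [MeasureSpace Ω] [IsProbabilityMeasure (ℙ : Measure Ω)]
    (X Y : ℕ → Ω → ℝ) (hmX : ∀ i, Measurable (X i)) (hmY : ∀ i, Measurable (Y i))
    (hindep : iIndepFun (fun i ω => (X i ω, Y i ω)) ℙ)
    (hident : ∀ i, IdentDistrib (fun ω => (X i ω, Y i ω)) (fun ω => (X 0 ω, Y 0 ω)) ℙ ℙ)
    (a0 b0 : ℝ) (ε : Ω → ℝ) (hmε : Measurable ε)
    (hmodel : ∀ ω, Y 0 ω = a0 * X 0 ω + b0 + ε ω)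
    (hXε : IndepFun (X 0) ε ℙ)
    (f : ℝ → ℝ)
    (hdens : Measure.map ε ℙ = volume.withDensity (fun x => ENNReal.ofReal (f x)))
    (hsymm : ∀ x, f x = f (-x))
    (hmode : ∀ x : ℝ, x ≠ 0 → f x < f 0)
    (hanti : StrictAntiOn f (Set.Ioi (0 : ℝ)))
    (r : ℝ) (hr : 0 < r)
    (Mn : ℕ → ℝ × ℝ → Ω → ℝ)
    (hMn : ∀ n θ ω, Mn n θ ω = (n : ℝ)⁻¹ * ∑ i ∈ Finset.range n,
      Set.indicator {p : ℝ × ℝ | |p.1 * θ.1 + θ.2 - p.2| ^ 2 ≤ r ^ 2 * (p.1 ^ 2 + 1)}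
        (fun _ => (1 : ℝ)) (X i ω, Y i ω)) :
    ∀ᵐ ω ∂ℙ, Tendsto (fun n => ⨆ θ : ℝ × ℝ, Mn n θ ω) atTop
      (nhds ((ℙ {ω' | ε ω' ^ 2 ≤ r ^ 2 * (X 0 ω' ^ 2 + 1)}).toReal)) := by
  set Z : ℕ → Ω → ℝ × ℝ := fun i ω => (X i ω, Y i ω)
  have hZ : ∀ i, Measurable (Z i) := fun i => (hmX i).prodMk (hmY i)
  have hZ₀ : Z 0 = fun ω => (X 0 ω, a0 * X 0 ω + b0 + ε ω) := funext fun ω => by simp [Z, hmodel]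
  set P := (ℙ : Measure Ω).map (Z 0)
  have hpeak : ∀ c L : ℝ,
      Measure.map ε ℙ (Icc (c - L) (c + L)) ≤ Measure.map ε ℙ (Icc (-L) L) := by
    rw [hdens]
    exact withDensity_Icc_le_Icc_of_abs_le fun x y hxy =>
      ENNReal.ofReal_le_ofReal (apply_le_apply_of_abs_le hsymm hmode hanti hxy)
  have hmax : ∀ ρ θ, P (houghSet ρ θ) ≤ P (houghSet ρ (a0, b0)) := by
    simp only [P, hZ₀]
    exact map_houghSet_le_of_indepFun (hmX 0) hmε hXε hpeak a0 b0
  have hm : P.real (houghSet r (a0, b0)) =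
      (ℙ {ω' | ε ω' ^ 2 ≤ r ^ 2 * (X 0 ω' ^ 2 + 1)}).toReal := by
    rw [map_measureReal_apply (hZ 0) (measurableSet_houghSet _ _)]
    congr 2
    ext ω
    simp only [houghSet, Z, mem_preimage, mem_ofPred_eq, hmodel, sq_abs]
    rw [show X 0 ω * a0 + b0 - (a0 * X 0 ω + b0 + ε ω) = -ε ω by ring, neg_sq]
  have hz := (ae_ball_iff (countable_houghBrackets P)).mpr fun B hB =>
    ae_tendsto_empiricalFreq hZ hindep hident (measurableSet_of_mem_houghBrackets hB)
  filter_upwards [hz,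
    ae_tendsto_empiricalFreq hZ hindep hident (measurableSet_houghSet r (a0, b0))] with ω hzω hz₀
  rw [← hm]
  simp only [hMn]
  exact tendsto_iSup_empiricalFreq_houghSet hr.le hmax hzω hz₀

/-- Under the linear model with i.i.d. observations, the maximal value of the
empirical Hough objective converges almost surely to the maximal value of its
deterministic counterpart: `sup_θ M_{r,n}(θ) → M_r(θ₀) = P{ε² ≤ r²‖Z‖²}` a.s.,
where `Z = (X, 1)ᵀ`. -/
theorem hough_max_value_strong_convergence
    {Ω : Type*} [MeasureSpace Ω] [IsProbabilityMeasure (ℙ : Measure Ω)]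
    (X Y : ℕ → Ω → ℝ) (hmX : ∀ i, Measurable (X i)) (hmY : ∀ i, Measurable (Y i))
    (hindep : iIndepFun (fun i ω => (X i ω, Y i ω)) ℙ)
    (hident : ∀ i, IdentDistrib (fun ω => (X i ω, Y i ω)) (fun ω => (X 0 ω, Y 0 ω)) ℙ ℙ)
    (a0 b0 : ℝ) (ε : Ω → ℝ) (hmε : Measurable ε)
    (hmodel : ∀ ω, Y 0 ω = a0 * X 0 ω + b0 + ε ω)
    (hXε : IndepFun (X 0) ε ℙ)
    (f : ℝ → ℝ)
    (hdens : Measure.map ε ℙ = volume.withDensity (fun x => ENNReal.ofReal (f x)))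
    (hbdd : ∃ C : ℝ, ∀ x, f x ≤ C)
    (hsymm : ∀ x, f x = f (-x))
    (hmode : ∀ x : ℝ, x ≠ 0 → f x < f 0)
    (hanti : StrictAntiOn f (Set.Ioi (0 : ℝ)))
    (r : ℝ) (hr : 0 < r)
    (Mn : ℕ → ℝ × ℝ → Ω → ℝ)
    (hMn : ∀ n θ ω, Mn n θ ω = (n : ℝ)⁻¹ * ∑ i ∈ Finset.range n,
      Set.indicator {p : ℝ × ℝ | |p.1 * θ.1 + θ.2 - p.2| ^ 2 ≤ r ^ 2 * (p.1 ^ 2 + 1)}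
        (fun _ => (1 : ℝ)) (X i ω, Y i ω)) :
    ∀ᵐ ω ∂ℙ, Tendsto (fun n => ⨆ θ : ℝ × ℝ, Mn n θ ω) atTop
      (nhds ((ℙ {ω' | ε ω' ^ 2 ≤ r ^ 2 * (X 0 ω' ^ 2 + 1)}).toReal)) :=
  hough_max_value_strong_convergence_general X Y hmX hmY hindep hident a0 b0 ε hmε hmodel hXε f
    hdens hsymm hmode hanti r hr Mn hMn
end

section
/- Let Θ_0 ⊂ ℝ² be compact, let Λ = [λ̲, λ̄] ⊂ (0, 1), let M : Θ_0 → [0, 1] and M_n : Θ_0 → [0, 1] (n = 1, 2, ...) be measurable functions with η_n := sup_{θ ∈ Θ_0} |M_n(θ) − M(θ)| → 0 as n → ∞, and suppose lim_{δ → 0} sup_{λ ∈ Λ} ℒ{θ ∈ Θ_0 : |M(θ) − λ| < δ} = 0, where ℒ denotes Lebesgue measure on ℝ². For λ ∈ Λ set Θ_λ = {θ ∈ Θ_0 : M(θ) ≥ λ} and Θ_{λ,n} = {θ ∈ Θ_0 : M_n(θ) ≥ λ}. Then sup_{λ ∈ Λ} ℒ{Θ_λ Δ Θ_{λ,n}}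 → 0 as n → ∞, where Δ denotes symmetric difference; moreover, for every n and λ ∈ Λ one has the inclusion Θ_λ Δ Θ_{λ,n} ⊆ {θ ∈ Θ_0 : |M(θ) − λ| ≤ η_n}. -/
/-!
Where `|Mₙ − M| ≤ ηₙ`, the two superlevel sets at level `λ` can only disagree at points where
`M` lies within `ηₙ` of `λ`. Once `ηₙ < δ`, the measure of the symmetric difference is therefore
bounded by the mass of the band `{|M − λ| < δ}`, which the no-flat-parts condition makes small
uniformly in `λ`.
-/

open MeasureTheory Filter Set Topology

section

variable {α : Type*}

theorem abs_sub_le_iSup_abs_sub_of_mem_Icc {s : Set α} {f g : α → ℝ} {a b : ℝ}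
    (hf : ∀ x ∈ s, f x ∈ Icc a b) (hg : ∀ x ∈ s, g x ∈ Icc a b) {x : α} (hx : x ∈ s) :
    |g x - f x| ≤ ⨆ y : s, |g y - f y| := by
  refine le_ciSup (f := fun y : s => |g y - f y|) ⟨b - a, forall_mem_range.2 fun y => ?_⟩ ⟨x, hx⟩
  obtain ⟨hfa, hfb⟩ := hf y y.2
  obtain ⟨hga, hgb⟩ := hg y y.2
  exact abs_sub_le_of_le_of_le hga hgb hfa hfb

theorem symmDiff_superlevel_subset_abs_sub_le {s : Set α} {f g : α → ℝ} {ε : ℝ}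
    (hfg : ∀ x ∈ s, |g x - f x| ≤ ε) (c : ℝ) :
    symmDiff {x ∈ s | c ≤ f x} {x ∈ s | c ≤ g x} ⊆ {x ∈ s | |f x - c| ≤ ε} := by
  rintro x (⟨⟨hx, hfx⟩, hgx⟩ | ⟨⟨hx, hgx⟩, hfx⟩)
  all_goals
    have hgf := abs_sub_le_iff.mp (hfg x hx)
    simp only [mem_ofPred_eq, hx, true_and, not_le] at hfx hgx
    exact ⟨hx, abs_le.mpr ⟨by linarith, by linarith⟩⟩

theorem tendsto_iSup_measure_of_subset_band [MeasurableSpace α] {ι : Type*} {l : Filter ι}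
    (μ : Measure α) {s : Set α} {f : α → ℝ} {I : Set ℝ} {A : ι → ℝ → Set α} {η : ι → ℝ}
    (hA : ∀ n, ∀ c ∈ I, A n c ⊆ {x ∈ s | |f x - c| ≤ η n})
    (hη : Tendsto η l (𝓝 0))
    (hflat : Tendsto (fun δ : ℝ => ⨆ c ∈ I, μ {x ∈ s | |f x - c| < δ}) (𝓝[>] 0) (𝓝 0)) :
    Tendsto (fun n => ⨆ c ∈ I, μ (A n c)) l (𝓝 0) := by
  refine ENNReal.tendsto_nhds_zero.mpr fun ε hε => ?_
  obtain ⟨δ, hδε, hδ⟩ :=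
    ((hflat.eventually (gt_mem_nhds hε)).and self_mem_nhdsWithin).exists
  filter_upwards [hη.eventually (gt_mem_nhds hδ)] with n hηδ
  refine le_trans (iSup₂_mono fun c hc => measure_mono fun x hx => ?_) hδε.le
  obtain ⟨hxs, hxc⟩ := hA n c hc hx
  exact ⟨hxs, hxc.trans_lt hηδ⟩

end

theorem hough_level_set_convergence_general
    (Θ0 : Set (ℝ × ℝ))
    (lo hi : ℝ)
    (M : ℝ × ℝ → ℝ) (Mn : ℕ → ℝ × ℝ → ℝ)
    (hMrange : ∀ θ ∈ Θ0, M θ ∈ Set.Icc (0 : ℝ) 1)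
    (hMnrange : ∀ n, ∀ θ ∈ Θ0, Mn n θ ∈ Set.Icc (0 : ℝ) 1)
    (η : ℕ → ℝ)
    (hη : ∀ n, η n = ⨆ θ : Θ0, |Mn n θ.1 - M θ.1|)
    (hηto : Tendsto η atTop (nhds 0))
    (hflat : Tendsto
      (fun δ : ℝ => ⨆ lam ∈ Set.Icc lo hi, volume {θ ∈ Θ0 | |M θ - lam| < δ})
      (nhdsWithin 0 (Set.Ioi 0)) (nhds 0)) :
    Tendsto
      (fun n => ⨆ lam ∈ Set.Icc lo hi,
        volume (symmDiff {θ ∈ Θ0 | lam ≤ M θ} {θ ∈ Θ0 | lam ≤ Mn n θ}))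
      atTop (nhds 0) ∧
    ∀ n : ℕ, ∀ lam ∈ Set.Icc lo hi,
      symmDiff {θ ∈ Θ0 | lam ≤ M θ} {θ ∈ Θ0 | lam ≤ Mn n θ}
        ⊆ {θ ∈ Θ0 | |M θ - lam| ≤ η n} := by
  have hband : ∀ n : ℕ, ∀ lam ∈ Set.Icc lo hi,
      symmDiff {θ ∈ Θ0 | lam ≤ M θ} {θ ∈ Θ0 | lam ≤ Mn n θ}
        ⊆ {θ ∈ Θ0 | |M θ - lam| ≤ η n} := fun n lam _ =>
    symmDiff_superlevel_subset_abs_sub_le (fun θ hθ => (hη n).symm ▸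
      abs_sub_le_iSup_abs_sub_of_mem_Icc hMrange (hMnrange n) hθ) lam
  exact ⟨tendsto_iSup_measure_of_subset_band volume hband hηto hflat, hband⟩

/-- Level-set convergence (Step 1 of the excess-mass theorem): if `Mₙ → M` uniformly
on a compact `Θ₀` and `M` has no flat parts over levels `λ ∈ [λ̲, λ̄] ⊂ (0,1)`, then
the empirical level sets converge to the true level sets in Lebesgue measure,
uniformly over `λ`; moreover `Θ_λ Δ Θ_{λ,n} ⊆ {θ : |M(θ) − λ| ≤ ηₙ}` for all `n, λ`. -/
theorem hough_level_set_convergence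
    (Θ0 : Set (ℝ × ℝ)) (hΘ0 : IsCompact Θ0)
    (lo hi : ℝ) (hlo : 0 < lo) (hhi : hi < 1) (hlohi : lo ≤ hi)
    (M : ℝ × ℝ → ℝ) (Mn : ℕ → ℝ × ℝ → ℝ)
    (hMmeas : Measurable M) (hMnmeas : ∀ n, Measurable (Mn n))
    (hMrange : ∀ θ ∈ Θ0, M θ ∈ Set.Icc (0 : ℝ) 1)
    (hMnrange : ∀ n, ∀ θ ∈ Θ0, Mn n θ ∈ Set.Icc (0 : ℝ) 1)
    (η : ℕ → ℝ)
    (hη : ∀ n, η n = ⨆ θ : Θ0, |Mn n θ.1 - M θ.1|)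
    (hηto : Tendsto η atTop (nhds 0))
    (hflat : Tendsto
      (fun δ : ℝ => ⨆ lam ∈ Set.Icc lo hi, volume {θ ∈ Θ0 | |M θ - lam| < δ})
      (nhdsWithin 0 (Set.Ioi 0)) (nhds 0)) :
    Tendsto
      (fun n => ⨆ lam ∈ Set.Icc lo hi,
        volume (symmDiff {θ ∈ Θ0 | lam ≤ M θ} {θ ∈ Θ0 | lam ≤ Mn n θ}))
      atTop (nhds 0) ∧
    ∀ n : ℕ, ∀ lam ∈ Set.Icc lo hi,
      symmDiff {θ ∈ Θ0 | lam ≤ M θ} {θ ∈ Θ0 | lam ≤ Mn n θ}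
        ⊆ {θ ∈ Θ0 | |M θ - lam| ≤ η n} :=
  hough_level_set_convergence_general Θ0 lo hi M Mn hMrange hMnrange η hη hηto hflat
end

section
/- Let Θ_0 ⊂ ℝ² be compact and let f, g : Θ_0 → [0, 1] be measurable. Fix λ ∈ (0, 1), set Θ = {θ ∈ Θ_0 : f(θ) ≥ λ}, and let η = sup_{θ ∈ Θ_0} |f(θ) − g(θ)|. Then |∫_{Θ_0} (g(θ) − λ)⁺ dθ − ∫_{Θ_0} (f(θ) − λ)⁺ dθ − ∫_{Θ} (g(θ) − f(θ)) dθ| ≤ 2η · ℒ{θ ∈ Θ_0 : |f(θ) − λ| ≤ η}, where (x)⁺ = max(0, x) and ℒ denotes Lebesgue measure on ℝ². -/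
open MeasureTheory

/-- Excess-mass decomposition (Step 2 of the excess-mass theorem): for measurable
`f, g : Θ₀ → [0,1]` on a compact set `Θ₀`, level `λ ∈ (0,1)`, `Θ = {f ≥ λ}` and
`η = sup_{Θ₀} |f − g|`, one has
`|∫(g − λ)⁺ − ∫(f − λ)⁺ − ∫_Θ (g − f)| ≤ 2η ℒ{θ ∈ Θ₀ : |f(θ) − λ| ≤ η}`. -/
theorem hough_excess_mass_decomposition
    (Θ0 : Set (ℝ × ℝ)) (hΘ0 : IsCompact Θ0)
    (f g : ℝ × ℝ → ℝ) (hf : Measurable f) (hg : Measurable g)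
    (hfr : ∀ θ ∈ Θ0, f θ ∈ Set.Icc (0 : ℝ) 1)
    (hgr : ∀ θ ∈ Θ0, g θ ∈ Set.Icc (0 : ℝ) 1)
    (lam : ℝ) (hlam : lam ∈ Set.Ioo (0 : ℝ) 1)
    (η : ℝ) (hη : η = ⨆ θ : Θ0, |f θ.1 - g θ.1|) :
    |(∫ θ in Θ0, max (g θ - lam) 0) - (∫ θ in Θ0, max (f θ - lam) 0)
        - ∫ θ in {θ ∈ Θ0 | lam ≤ f θ}, (g θ - f θ)|
      ≤ 2 * η * (volume {θ ∈ Θ0 | |f θ - lam| ≤ η}).toReal := by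
  obtain ⟨hlam0, hlam1⟩ := hlam
  set T : Set (ℝ × ℝ) := {θ ∈ Θ0 | lam ≤ f θ} with hT
  set S : Set (ℝ × ℝ) := {θ ∈ Θ0 | |f θ - lam| ≤ η} with hS
  have hΘ0m : MeasurableSet Θ0 := hΘ0.measurableSet
  have hvol : volume Θ0 < ⊤ := hΘ0.measure_lt_top
  have hTm : MeasurableSet T := hΘ0m.inter (measurableSet_le measurable_const hf)
  have hSm : MeasurableSet S :=
    hΘ0m.inter (measurableSet_le ((hf.sub measurable_const).abs) measurable_const)
  -- η bounds
  have hη0 : 0 ≤ η := by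
    rw [hη]; exact Real.iSup_nonneg fun θ => abs_nonneg _
  have hηb : ∀ θ ∈ Θ0, |f θ - g θ| ≤ η := by
    intro θ hθ
    rw [hη]
    have hbdd : BddAbove (Set.range fun θ : Θ0 => |f θ.1 - g θ.1|) := by
      refine ⟨1, ?_⟩
      rintro _ ⟨θ', rfl⟩
      obtain ⟨hf0, hf1⟩ := hfr θ'.1 θ'.2
      obtain ⟨hg0, hg1⟩ := hgr θ'.1 θ'.2
      exact abs_le.mpr ⟨by linarith, by linarith⟩
    exact le_ciSup hbdd (⟨θ, hθ⟩ : Θ0)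
  -- the three integrands
  set F1 : ℝ × ℝ → ℝ := fun θ => max (g θ - lam) 0 with hF1
  set F2 : ℝ × ℝ → ℝ := fun θ => max (f θ - lam) 0 with hF2
  set F3 : ℝ × ℝ → ℝ := T.indicator (fun θ => g θ - f θ) with hF3
  have hI1 : IntegrableOn F1 Θ0 := by
    refine Measure.integrableOn_of_bounded (M := 1) hvol.ne
      ((hg.sub measurable_const).max measurable_const).aestronglyMeasurable
      ((ae_restrict_iff' hΘ0m).2 (Filter.Eventually.of_forall fun θ hθ => ?_))
    obtain ⟨hg0, hg1⟩ := hgr θ hθ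
    rw [Real.norm_eq_abs]
    exact abs_le.mpr ⟨le_trans (by norm_num) (le_max_right _ _), max_le (by linarith) (by linarith)⟩
  have hI2 : IntegrableOn F2 Θ0 := by
    refine Measure.integrableOn_of_bounded (M := 1) hvol.ne
      ((hf.sub measurable_const).max measurable_const).aestronglyMeasurable
      ((ae_restrict_iff' hΘ0m).2 (Filter.Eventually.of_forall fun θ hθ => ?_))
    obtain ⟨hf0, hf1⟩ := hfr θ hθ
    rw [Real.norm_eq_abs]
    exact abs_le.mpr ⟨le_trans (by norm_num) (le_max_right _ _), max_le (by linarith) (by linarith)⟩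
  have hI3 : IntegrableOn F3 Θ0 := by
    refine Measure.integrableOn_of_bounded (M := 1) hvol.ne
      ((hg.sub hf).indicator hTm).aestronglyMeasurable
      ((ae_restrict_iff' hΘ0m).2 (Filter.Eventually.of_forall fun θ hθ => ?_))
    rw [Real.norm_eq_abs]
    by_cases hθT : θ ∈ T
    · obtain ⟨hf0, hf1⟩ := hfr θ hθ
      obtain ⟨hg0, hg1⟩ := hgr θ hθ
      rw [hF3, Set.indicator_of_mem hθT]
      exact abs_le.mpr ⟨by linarith, by linarith⟩
    · rw [hF3, Set.indicator_of_notMem hθT]; simp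
  -- rewrite the T-integral as an indicator integral
  have hTsub : Θ0 ∩ T = T := Set.inter_eq_self_of_subset_right (Set.sep_subset _ _)
  have hrw : ∫ θ in T, (g θ - f θ) = ∫ θ in Θ0, F3 θ := by
    rw [hF3, setIntegral_indicator hTm, hTsub]
  -- combine into single integral
  have hcomb : (∫ θ in Θ0, F1 θ) - (∫ θ in Θ0, F2 θ) - ∫ θ in Θ0, F3 θ
      = ∫ θ in Θ0, (F1 θ - F2 θ - F3 θ) := by
    have h12 : Integrable (fun θ => F1 θ - F2 θ) (volume.restrict Θ0) := hI1.sub hI2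
    rw [← integral_sub hI1 hI2, ← integral_sub h12 hI3]
  -- pointwise bound
  have hpt : ∀ θ ∈ Θ0, |F1 θ - F2 θ - F3 θ| ≤ S.indicator (fun _ => η) θ := by
    intro θ hθ
    by_cases hθT : θ ∈ T
    · have hfl : lam ≤ f θ := hθT.2
      have e2 : F2 θ = f θ - lam := max_eq_left (by linarith)
      have e3 : F3 θ = g θ - f θ := Set.indicator_of_mem hθT _
      by_cases hgl : lam ≤ g θ
      · have e1 : F1 θ = g θ - lam := max_eq_left (by linarith)
        have hSind : (0:ℝ) ≤ S.indicator (fun _ => η) θ :=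
          Set.indicator_nonneg (fun _ _ => hη0) θ
        rw [e1, e2, e3]
        simpa using hSind
      · push_neg at hgl
        have e1 : F1 θ = 0 := max_eq_right (by linarith)
        have hfg' : f θ - g θ ≤ η := (abs_le.mp (hηb θ hθ)).2
        have hθS : θ ∈ S := ⟨hθ, abs_le.mpr ⟨by linarith, by linarith⟩⟩
        rw [e1, e2, e3, Set.indicator_of_mem hθS]
        exact abs_le.mpr ⟨by linarith, by linarith⟩
    · have hfl : f θ < lam := lt_of_not_ge fun h => hθT ⟨hθ, h⟩
      have e2 : F2 θ = 0 := max_eq_right (by linarith)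
      have e3 : F3 θ = 0 := Set.indicator_of_notMem hθT _
      by_cases hgl : lam ≤ g θ
      · have e1 : F1 θ = g θ - lam := max_eq_left (by linarith)
        have hfg' : g θ - f θ ≤ η := by
          have := (abs_le.mp (hηb θ hθ)).1; linarith
        have hθS : θ ∈ S := ⟨hθ, abs_le.mpr ⟨by linarith, by linarith⟩⟩
        rw [e1, e2, e3, Set.indicator_of_mem hθS]
        exact abs_le.mpr ⟨by linarith, by linarith⟩
      · push_neg at hgl
        have e1 : F1 θ = 0 := max_eq_right (by linarith)
        have hSind : (0:ℝ) ≤ S.indicator (fun _ => η) θ :=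
          Set.indicator_nonneg (fun _ _ => hη0) θ
        rw [e1, e2, e3]
        simpa using hSind
  -- put it together
  rw [hrw, hcomb]
  have hIind : IntegrableOn (S.indicator fun _ => η) Θ0 :=
    (integrableOn_const hvol.ne).indicator hSm
  calc |∫ θ in Θ0, (F1 θ - F2 θ - F3 θ)|
      ≤ ∫ θ in Θ0, |F1 θ - F2 θ - F3 θ| := by
        simpa [Real.norm_eq_abs] using
          norm_integral_le_integral_norm (μ := volume.restrict Θ0)
            (f := fun θ => F1 θ - F2 θ - F3 θ)
    _ ≤ ∫ θ in Θ0, S.indicator (fun _ => η) θ :=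
        setIntegral_mono_on ((hI1.sub hI2).sub hI3).abs hIind hΘ0m hpt
    _ = η * (volume S).toReal := by
        rw [setIntegral_indicator hSm,
          Set.inter_eq_self_of_subset_right (Set.sep_subset _ _), setIntegral_const,
          smul_eq_mul, mul_comm, measureReal_def]
    _ ≤ 2 * η * (volume S).toReal := by
        nlinarith [ENNReal.toReal_nonneg (a := volume S), hη0]
end
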